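/- arXiv:2312.15539 — 5 statements merged into one kernel-verified Lean document; each statement's English description precedes it below -/
import Mathlib

section
/- Let 0 < c ≤ C. Suppose that for each i ∈ {1,…,d} the N-function φ_i is C² on (0,∞), satisfies the Δ₂-condition with constant D, is uniformly convex with constants c, C, and the pair (φ_i, A_i) satisfies the orthotropic growth conditions with constants c, C. Define ψ_i(t) = ∫₀ᵗ √(s φ_i'(s)) ds, V_i(s) = ψ_i'(|s|) s/|s| for s ≠ 0 and V_i(0) = 0, and the coordinatewise vector fields A(ξ)_i = A_i(ξ_i), V(ξ)_i = V_i(ξ_i) on ℝ^d. Then there exist constants 0 < c' ≤ C', depending only on c, C, D (and not on ξ, η), such that for all ξ, η ∈ ℝ^d the following four quantities are pairwise comparable with constants c', C': (A(ξ) − A(η))·(ξ − η); |V(ξ) − V(η)|²; Σ_{i=1}^d (φ_i)_{|ξ_i|}(|ξ_i − η_i|); Σ_{i=1}^d φ_i''(|ξ_i| + |η_i|)|ξ_i − η_i|² (each summand interpreted as 0 when ξ_i = η_i). -/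
/-!
Every one of the four quantities is compared, coordinate by coordinate, with
`φ'(|ξ| + |η|) / (|ξ| + |η|) * |ξ - η|²`, where `x ≃ y` means `k y ≤ x ≤ K y` for constants
`0 < k ≤ K`.

Uniform convexity gives `t φ''(t) ≃ φ'(t)`, and since `φ'(t) t^(-C)` is nonincreasing it also
gives the doubling bound `φ'(2t) ≤ 2^C φ'(t)`; hence `φ'(s)/s ≃ φ'(t)/t` whenever `s ≃ t`.
For the shifted N-function, monotonicity of `(φ_a)'` gives
`φ_a(t) ≃ t (φ_a)'(t) = t² φ'(a+t)/(a+t)`, and `a + t ≃ |ξ| + |η|` for `a = |ξ|`, `t = |ξ - η|`.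
For `V`, where `ψ'(t)² = t φ'(t)`: if `ξ` and `η` have opposite signs then
`|V(ξ) - V(η)| = ψ'(|ξ|) + ψ'(|η|) ≃ ψ'(|ξ| + |η|)`; if they have the same sign then
`(ψ'(a) - ψ'(b)) (ψ'(a) + ψ'(b)) = a φ'(a) - b φ'(b)`, which lies between `(a - b) φ'(a)` and
`(1 + C) (a - b) φ'(a)` by the mean value theorem, while `ψ'(a) ≤ ψ'(a) + ψ'(b) ≤ 2 ψ'(a)`.
Summing over the coordinates and chaining the comparisons gives the result.
-/

open MeasureTheory

/-- An N-function `Φ` with derivative `Φ'`: differentiable on `[0,∞)` with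
`Φ(0) = 0`, `Φ(t) = ∫₀ᵗ Φ'(s) ds`, `Φ'` nondecreasing, right-continuous,
`Φ'(0) = 0` and `Φ'(t) > 0` for `t > 0`. -/
structure IsNFunction (Φ Φ' : ℝ → ℝ) : Prop where
  map_zero : Φ 0 = 0
  eq_integral : ∀ t : ℝ, 0 ≤ t → Φ t = ∫ s in (0:ℝ)..t, Φ' s
  deriv_zero : Φ' 0 = 0
  deriv_pos : ∀ t : ℝ, 0 < t → 0 < Φ' t
  deriv_mono : MonotoneOn Φ' (Set.Ici 0)
  deriv_rightCont : ∀ t : ℝ, 0 ≤ t → ContinuousWithinAt Φ' (Set.Ici t) t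

/-- The Δ₂-condition with constant `D`. -/
def Delta2 (Φ : ℝ → ℝ) (D : ℝ) : Prop := ∀ t : ℝ, 0 < t → Φ (2 * t) ≤ D * Φ t

/-- Uniform convexity with constants `c ≤ C`: `c Φ'(t) ≤ t Φ''(t) ≤ C Φ'(t)` for `t > 0`. -/
def UniformlyConvex (Φ' Φ'' : ℝ → ℝ) (c C : ℝ) : Prop :=
  ∀ t : ℝ, 0 < t → c * Φ' t ≤ t * Φ'' t ∧ t * Φ'' t ≤ C * Φ' t

/-- The orthotropic growth conditions for the pair `(φ, A)` with constants `c ≤ C`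
(all terms vanish when `ξ = η`). -/
def OrthotropicGrowth (Φ'' A : ℝ → ℝ) (c C : ℝ) : Prop :=
  ∀ ξ η : ℝ, c * (Φ'' (|ξ| + |η|) * |ξ - η| ^ 2) ≤ (A ξ - A η) * (ξ - η) ∧
    |A ξ - A η| ≤ C * (Φ'' (|ξ| + |η|) * |ξ - η|)

/-- Derivative of the shifted N-function: `Φ_a'(t) = (t/(a+t)) Φ'(a+t)`. -/
noncomputable def shiftDeriv (Φ' : ℝ → ℝ) (a t : ℝ) : ℝ := t / (a + t) * Φ' (a + t)

/-- The shifted N-function `Φ_a(t) = ∫₀ᵗ (s/(a+s)) Φ'(a+s) ds`. -/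
noncomputable def shiftN (Φ' : ℝ → ℝ) (a t : ℝ) : ℝ := ∫ s in (0:ℝ)..t, shiftDeriv Φ' a s

/-- `ψ'(t) = √(t Φ'(t))`. -/
noncomputable def psiDeriv (Φ' : ℝ → ℝ) (t : ℝ) : ℝ := Real.sqrt (t * Φ' t)

/-- `ψ(t) = ∫₀ᵗ √(s Φ'(s)) ds`. -/
noncomputable def psiOf (Φ' : ℝ → ℝ) (t : ℝ) : ℝ := ∫ s in (0:ℝ)..t, psiDeriv Φ' s

/-- `V(s) = ψ'(|s|) s/|s|` for `s ≠ 0`, `V(0) = 0`. -/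
noncomputable def Vof (Φ' : ℝ → ℝ) (s : ℝ) : ℝ :=
  if s = 0 then 0 else psiDeriv Φ' |s| * s / |s|

/-- The four quantities of the equivalence: `(A(ξ)−A(η))·(ξ−η)`, `|V(ξ)−V(η)|²`,
`Σᵢ (φᵢ)_{|ξᵢ|}(|ξᵢ−ηᵢ|)` and `Σᵢ φᵢ''(|ξᵢ|+|ηᵢ|)|ξᵢ−ηᵢ|²`. -/
noncomputable def quantQ (d : ℕ) (φ' φ'' A : Fin d → ℝ → ℝ) (ξ η : Fin d → ℝ) : Fin 4 → ℝ :=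
  ![∑ i, (A i (ξ i) - A i (η i)) * (ξ i - η i),
    ∑ i, (Vof (φ' i) (ξ i) - Vof (φ' i) (η i)) ^ 2,
    ∑ i, shiftN (φ' i) |ξ i| |ξ i - η i|,
    ∑ i, φ'' i (|ξ i| + |η i|) * (ξ i - η i) ^ 2]

open Set

def IsComparable (k K x y : ℝ) : Prop := k * y ≤ x ∧ x ≤ K * y

namespace IsComparable

variable {k K l L x y z : ℝ}

theorem mono {k' K' : ℝ} (h : IsComparable k K x y) (hy : 0 ≤ y) (hk : k' ≤ k) (hK : K ≤ K') :
    IsComparable k' K' x y :=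
  ⟨(mul_le_mul_of_nonneg_right hk hy).trans h.1, h.2.trans (mul_le_mul_of_nonneg_right hK hy)⟩

theorem trans (hxy : IsComparable k K x y) (hyz : IsComparable l L y z) (hk : 0 ≤ k)
    (hK : 0 ≤ K) : IsComparable (k * l) (K * L) x z :=
  ⟨by rw [mul_assoc]; exact (mul_le_mul_of_nonneg_left hyz.1 hk).trans hxy.1,
    by rw [mul_assoc]; exact hxy.2.trans (mul_le_mul_of_nonneg_left hyz.2 hK)⟩

theorem symm (h : IsComparable k K x y) (hk : 0 < k) (hK : 0 < K) :
    IsComparable K⁻¹ k⁻¹ y x :=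
  ⟨by rw [inv_mul_le_iff₀ hK]; exact h.2, by rw [le_inv_mul_iff₀ hk]; exact h.1⟩

theorem mul_right (h : IsComparable k K x y) {r : ℝ} (hr : 0 ≤ r) :
    IsComparable k K (x * r) (y * r) :=
  ⟨by rw [← mul_assoc]; exact mul_le_mul_of_nonneg_right h.1 hr,
    by rw [← mul_assoc]; exact mul_le_mul_of_nonneg_right h.2 hr⟩

theorem sq (h : IsComparable k K x y) (hk : 0 ≤ k) (hy : 0 ≤ y) :
    IsComparable (k ^ 2) (K ^ 2) (x ^ 2) (y ^ 2) := by
  have hky : 0 ≤ k * y := mul_nonneg hk hy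
  constructor
  · rw [← mul_pow]; exact pow_le_pow_left₀ hky h.1 2
  · rw [← mul_pow]; exact pow_le_pow_left₀ (hky.trans h.1) h.2 2

theorem sum {ι : Type*} {s : Finset ι} {f g : ι → ℝ}
    (h : ∀ i ∈ s, IsComparable k K (f i) (g i)) :
    IsComparable k K (∑ i ∈ s, f i) (∑ i ∈ s, g i) :=
  ⟨by rw [Finset.mul_sum]; exact Finset.sum_le_sum fun i hi => (h i hi).1,
    by rw [Finset.mul_sum]; exact Finset.sum_le_sum fun i hi => (h i hi).2⟩

end IsComparable

theorem isComparable_sub_sq {p q : ℝ} (hq : 0 ≤ q) (hqp : q ≤ p) :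
    IsComparable (1 / 4) 1 ((p - q) ^ 2) ((p ^ 2 - q ^ 2) ^ 2 / p ^ 2) := by
  rcases hqp.eq_or_lt with rfl | hlt
  · simp [IsComparable]
  have hp : 0 < p ^ 2 := by have : 0 < p := hq.trans_lt hlt; positivity
  have hfactor : (p ^ 2 - q ^ 2) ^ 2 / p ^ 2 = (p - q) ^ 2 * ((p + q) ^ 2 / p ^ 2) := by
    ring
  have hlow : 1 ≤ (p + q) ^ 2 / p ^ 2 := by rw [le_div_iff₀ hp]; nlinarith
  have hupp : (p + q) ^ 2 / p ^ 2 ≤ 4 := by rw [div_le_iff₀ hp]; nlinarith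
  have hd : 0 ≤ (p - q) ^ 2 := sq_nonneg _
  rw [hfactor]
  constructor <;> nlinarith

theorem antitoneOn_mul_rpow_neg {f f' : ℝ → ℝ} {q : ℝ}
    (hf : ∀ t, 0 < t → HasDerivAt f (f' t) t) (h : ∀ t, 0 < t → t * f' t ≤ q * f t) :
    AntitoneOn (fun t => f t * t ^ (-q)) (Ioi 0) := by
  have hderiv : ∀ x ∈ Ioi (0 : ℝ), HasDerivAt (fun t => f t * t ^ (-q))
      (f' x * x ^ (-q) + f x * (-q * x ^ (-q - 1))) x := fun x hx =>
    (hf x hx).mul (Real.hasDerivAt_rpow_const (Or.inl (ne_of_gt hx)))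
  refine antitoneOn_of_hasDerivWithinAt_nonpos (convex_Ioi 0)
    (fun x hx => (hderiv x hx).continuousAt.continuousWithinAt)
    (fun x hx => (hderiv x (interior_subset hx)).hasDerivWithinAt) fun x hx => ?_
  rw [interior_Ioi] at hx
  have hx0 : (0 : ℝ) < x := hx
  calc f' x * x ^ (-q) + f x * (-q * x ^ (-q - 1))
      = (x * f' x - q * f x) * x ^ (-q - 1) := by
        rw [Real.rpow_sub_one hx0.ne']; field_simp; ring
    _ ≤ 0 := mul_nonpos_of_nonpos_of_nonneg (by linarith [h x hx0]) (by positivity)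

theorem MonotoneOn.intervalIntegral_le_sub_mul {f : ℝ → ℝ} {a b : ℝ} (hab : a ≤ b)
    (hf : MonotoneOn f (Icc a b)) : ∫ x in a..b, f x ≤ (b - a) * f b := by
  have hint : IntervalIntegrable f volume a b :=
    (hf.mono (uIcc_of_le hab).subset).intervalIntegrable
  simpa using intervalIntegral.integral_mono_on hab hint intervalIntegrable_const
    fun x hx => hf hx (right_mem_Icc.2 hab) hx.2

theorem MonotoneOn.sub_mul_le_intervalIntegral {f : ℝ → ℝ} {a b : ℝ} (hab : a ≤ b)
    (hf : MonotoneOn f (Icc a b)) : (b - a) * f a ≤ ∫ x in a..b, f x := by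
  have hint : IntervalIntegrable f volume a b :=
    (hf.mono (uIcc_of_le hab).subset).intervalIntegrable
  simpa using intervalIntegral.integral_mono_on hab intervalIntegrable_const hint
    fun x hx => hf (left_mem_Icc.2 hab) hx hx.1

namespace IsNFunction

variable {φ φ' φ'' : ℝ → ℝ} {c C : ℝ}

theorem deriv_le_deriv (hN : IsNFunction φ φ') {s t : ℝ} (hs : 0 ≤ s) (hst : s ≤ t) :
    φ' s ≤ φ' t :=
  hN.deriv_mono hs (hs.trans hst) hst

theorem deriv_nonneg (hN : IsNFunction φ φ') {t : ℝ} (ht : 0 ≤ t) : 0 ≤ φ' t :=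
  hN.deriv_zero ▸ hN.deriv_le_deriv le_rfl ht

theorem continuousOn_deriv (hN : IsNFunction φ φ')
    (hd2 : ∀ t, 0 < t → HasDerivAt φ' (φ'' t) t) : ContinuousOn φ' (Ici 0) := by
  intro t ht
  rcases (mem_Ici.1 ht).eq_or_lt with rfl | htpos
  · exact hN.deriv_rightCont 0 le_rfl
  · exact (hd2 t htpos).continuousAt.continuousWithinAt

theorem deriv_le_two_rpow_mul (hN : IsNFunction φ φ')
    (hd2 : ∀ t, 0 < t → HasDerivAt φ' (φ'' t) t) (huc : UniformlyConvex φ' φ'' c C)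
    (hC : 0 ≤ C) {s t : ℝ} (hs : 0 < s) (ht0 : 0 ≤ t) (ht : t ≤ 2 * s) :
    φ' t ≤ 2 ^ C * φ' s := by
  rcases le_total t s with hts | hst
  · exact (hN.deriv_le_deriv ht0 hts).trans
      (le_mul_of_one_le_left (hN.deriv_nonneg hs.le) (Real.one_le_rpow one_le_two hC))
  have htpos : 0 < t := hs.trans_le hst
  have hanti : φ' t * t ^ (-C) ≤ φ' s * s ^ (-C) :=
    antitoneOn_mul_rpow_neg hd2 (fun t ht => (huc t ht).2) hs htpos hst
  calc φ' t = φ' t * t ^ (-C) * t ^ C := by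
        rw [mul_assoc, ← Real.rpow_add htpos, neg_add_cancel, Real.rpow_zero, mul_one]
    _ ≤ φ' s * s ^ (-C) * t ^ C := mul_le_mul_of_nonneg_right hanti (by positivity)
    _ = (t / s) ^ C * φ' s := by rw [Real.div_rpow htpos.le hs.le, Real.rpow_neg hs.le]; ring
    _ ≤ 2 ^ C * φ' s := by
        gcongr
        · exact hN.deriv_nonneg hs.le
        · rwa [div_le_iff₀ hs]

theorem deriv_div_le (hN : IsNFunction φ φ')
    (hd2 : ∀ t, 0 < t → HasDerivAt φ' (φ'' t) t) (huc : UniformlyConvex φ' φ'' c C)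
    (hC : 0 ≤ C) {s t : ℝ} (ht : 0 ≤ t) (hts : t ≤ 2 * s) (hst : s ≤ 2 * t) :
    φ' t / t ≤ 2 * 2 ^ C * (φ' s / s) := by
  rcases ht.eq_or_lt with rfl | htpos
  · obtain rfl : s = 0 := by linarith
    simp
  have hs : 0 < s := by linarith
  calc φ' t / t ≤ 2 ^ C * φ' s / t :=
        div_le_div_of_nonneg_right (hN.deriv_le_two_rpow_mul hd2 huc hC hs ht hts) ht
    _ ≤ 2 ^ C * φ' s / (s / 2) :=
        div_le_div_of_nonneg_left (mul_nonneg (by positivity) (hN.deriv_nonneg hs.le))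
          (by positivity) (by linarith)
    _ = 2 * 2 ^ C * (φ' s / s) := by field_simp

theorem isComparable_deriv_div (hN : IsNFunction φ φ')
    (hd2 : ∀ t, 0 < t → HasDerivAt φ' (φ'' t) t) (huc : UniformlyConvex φ' φ'' c C)
    (hC : 0 ≤ C) {s t : ℝ} (hs : 0 ≤ s) (ht : 0 ≤ t) (hts : t ≤ 2 * s) (hst : s ≤ 2 * t) :
    IsComparable (1 / (2 * 2 ^ C)) (2 * 2 ^ C) (φ' t / t) (φ' s / s) :=
  ⟨by rw [one_div, inv_mul_le_iff₀ (by positivity)]; exact hN.deriv_div_le hd2 huc hC hs hst hts,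
    hN.deriv_div_le hd2 huc hC ht hts hst⟩

theorem mul_deriv_le_of_le_two_mul (hN : IsNFunction φ φ')
    (hd2 : ∀ t, 0 < t → HasDerivAt φ' (φ'' t) t) (huc : UniformlyConvex φ' φ'' c C)
    (hC : 0 ≤ C) {a m : ℝ} (ha : 0 < a) (hm : 0 ≤ m) (hma : m ≤ 2 * a) :
    m * φ' m ≤ 2 * 2 ^ C * (a * φ' a) := by
  calc m * φ' m ≤ (2 * a) * (2 ^ C * φ' a) :=
        mul_le_mul hma (hN.deriv_le_two_rpow_mul hd2 huc hC ha hm hma) (hN.deriv_nonneg hm)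
          (by linarith)
    _ = 2 * 2 ^ C * (a * φ' a) := by ring

theorem isComparable_mul_deriv_sub (hN : IsNFunction φ φ')
    (hd2 : ∀ t, 0 < t → HasDerivAt φ' (φ'' t) t) (huc : UniformlyConvex φ' φ'' c C)
    (hC : 0 ≤ C) {a b : ℝ} (hb : 0 ≤ b) (hba : b ≤ a) :
    IsComparable 1 (1 + C) (a * φ' a - b * φ' b) ((a - b) * φ' a) := by
  constructor
  · nlinarith [hN.deriv_le_deriv hb hba]
  rcases hba.eq_or_lt with rfl | hlt
  · simp
  obtain ⟨θ, hθ, hslope⟩ := exists_hasDerivAt_eq_slope (fun t => t * φ' t)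
    (fun t => φ' t + t * φ'' t) hlt
    ((continuousOn_id.mul (hN.continuousOn_deriv hd2)).mono
      (Icc_subset_Ici_self.trans (Ici_subset_Ici.2 hb)))
    (fun t ht => by simpa using (hasDerivAt_id' t).fun_mul (hd2 t (hb.trans_lt ht.1)))
  have hθpos : 0 < θ := hb.trans_lt hθ.1
  have hbound : φ' θ + θ * φ'' θ ≤ (1 + C) * φ' a := by
    have hmono := hN.deriv_le_deriv hθpos.le hθ.2.le
    nlinarith [(huc θ hθpos).2, hN.deriv_nonneg hθpos.le]
  rw [hslope, div_le_iff₀ (sub_pos.2 hlt)] at hbound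
  linarith

end IsNFunction

section Shift

variable {φ φ' φ'' : ℝ → ℝ} {c C : ℝ}

theorem shiftDeriv_monotoneOn (hN : IsNFunction φ φ') {a : ℝ} (ha : 0 ≤ a) :
    MonotoneOn (shiftDeriv φ' a) (Ici 0) := by
  intro s (hs : 0 ≤ s) t (ht : 0 ≤ t) hst
  have hfrac : s / (a + s) ≤ t / (a + t) := by
    rcases hs.eq_or_lt with rfl | hspos
    · simp only [zero_div]; positivity
    rw [div_le_div_iff₀ (by linarith) (by linarith)]
    nlinarith
  exact mul_le_mul hfrac (hN.deriv_le_deriv (by linarith) (by linarith))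
    (hN.deriv_nonneg (by linarith)) (div_nonneg ht (by linarith))

theorem shiftN_le (hN : IsNFunction φ φ') {a t : ℝ} (ha : 0 ≤ a) (ht : 0 ≤ t) :
    shiftN φ' a t ≤ t * shiftDeriv φ' a t := by
  simpa [shiftN] using
    ((shiftDeriv_monotoneOn hN ha).mono Icc_subset_Ici_self).intervalIntegral_le_sub_mul ht

theorem half_mul_shiftDeriv_le_shiftN (hN : IsNFunction φ φ') {a t : ℝ} (ha : 0 ≤ a)
    (ht : 0 ≤ t) : t / 2 * shiftDeriv φ' a (t / 2) ≤ shiftN φ' a t := by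
  have hmono := shiftDeriv_monotoneOn hN ha
  have hint : ∀ u v : ℝ, 0 ≤ u → u ≤ v →
      IntervalIntegrable (shiftDeriv φ' a) volume u v := fun u v hu huv =>
    (hmono.mono ((uIcc_of_le huv).subset.trans ((Icc_subset_Ici_iff huv).2 hu))).intervalIntegrable
  rw [shiftN, ← intervalIntegral.integral_add_adjacent_intervals (b := t / 2)
    (hint 0 (t / 2) le_rfl (by linarith)) (hint (t / 2) t (by linarith) (by linarith))]
  have hfirst : 0 ≤ ∫ s in (0 : ℝ)..t / 2, shiftDeriv φ' a s :=
    intervalIntegral.integral_nonneg (by linarith) fun s hs =>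
      mul_nonneg (div_nonneg hs.1 (by linarith [hs.1])) (hN.deriv_nonneg (by linarith [hs.1]))
  have hsecond := (hmono.mono ((Icc_subset_Ici_iff (by linarith : t / 2 ≤ t)).2
    (by linarith))).sub_mul_le_intervalIntegral (by linarith : t / 2 ≤ t)
  linarith

theorem isComparable_shiftN (hN : IsNFunction φ φ')
    (hd2 : ∀ t, 0 < t → HasDerivAt φ' (φ'' t) t) (huc : UniformlyConvex φ' φ'' c C)
    (hC : 0 ≤ C) {a t : ℝ} (ha : 0 ≤ a) (ht : 0 ≤ t) :
    IsComparable (1 / (4 * 2 ^ C)) 1 (shiftN φ' a t) (φ' (a + t) / (a + t) * t ^ 2) := by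
  constructor
  · rcases ht.eq_or_lt with rfl | htpos
    · simp [shiftN]
    refine le_trans ?_ (half_mul_shiftDeriv_le_shiftN hN ha ht)
    have hdouble : φ' (a + t) / 2 ^ C ≤ φ' (a + t / 2) := by
      rw [div_le_iff₀' (by positivity)]
      exact hN.deriv_le_two_rpow_mul hd2 huc hC (by positivity) (by positivity) (by linarith)
    have hfrac : t / 2 / (a + t) ≤ t / 2 / (a + t / 2) :=
      div_le_div_of_nonneg_left (by positivity) (by positivity) (by linarith)
    calc 1 / (4 * 2 ^ C) * (φ' (a + t) / (a + t) * t ^ 2)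
        = t / 2 * (t / 2 / (a + t) * (φ' (a + t) / 2 ^ C)) := by field_simp; ring
      _ ≤ t / 2 * (t / 2 / (a + t / 2) * φ' (a + t / 2)) := by
        gcongr
        exact div_nonneg (hN.deriv_nonneg (by positivity)) (by positivity)
  · calc shiftN φ' a t ≤ t * shiftDeriv φ' a t := shiftN_le hN ha ht
      _ = 1 * (φ' (a + t) / (a + t) * t ^ 2) := by rw [shiftDeriv]; ring

end Shift

section Psi

variable {φ φ' φ'' : ℝ → ℝ} {c C : ℝ}

theorem psiDeriv_nonneg (t : ℝ) : 0 ≤ psiDeriv φ' t :=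
  Real.sqrt_nonneg _

theorem psiDeriv_sq (hN : IsNFunction φ φ') {t : ℝ} (ht : 0 ≤ t) :
    psiDeriv φ' t ^ 2 = t * φ' t :=
  Real.sq_sqrt (mul_nonneg ht (hN.deriv_nonneg ht))

theorem psiDeriv_le_psiDeriv (hN : IsNFunction φ φ') {s t : ℝ} (hs : 0 ≤ s) (hst : s ≤ t) :
    psiDeriv φ' s ≤ psiDeriv φ' t :=
  Real.sqrt_le_sqrt (mul_le_mul hst (hN.deriv_le_deriv hs hst) (hN.deriv_nonneg hs) (hs.trans hst))

theorem Vof_of_nonneg {s : ℝ} (hs : 0 ≤ s) : Vof φ' s = psiDeriv φ' s := by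
  rcases hs.eq_or_lt with rfl | hspos
  · simp [Vof, psiDeriv]
  · rw [Vof, if_neg hspos.ne', abs_of_pos hspos, mul_div_assoc, div_self hspos.ne', mul_one]

theorem Vof_of_nonpos {s : ℝ} (hs : s ≤ 0) : Vof φ' s = -psiDeriv φ' (-s) := by
  rcases hs.eq_or_lt with rfl | hsneg
  · simp [Vof, psiDeriv]
  · rw [Vof, if_neg hsneg.ne, abs_of_neg hsneg, mul_div_assoc, div_neg, div_self hsneg.ne,
      mul_neg, mul_one]

theorem isComparable_psiDeriv_sub_sq (hN : IsNFunction φ φ')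
    (hd2 : ∀ t, 0 < t → HasDerivAt φ' (φ'' t) t) (huc : UniformlyConvex φ' φ'' c C)
    (hC : 0 ≤ C) {a b : ℝ} (hb : 0 ≤ b) (hba : b ≤ a) :
    IsComparable (1 / 4 * (1 / (2 * 2 ^ C))) ((1 + C) ^ 2 * (2 * 2 ^ C))
      ((psiDeriv φ' a - psiDeriv φ' b) ^ 2) (φ' (a + b) / (a + b) * (a - b) ^ 2) := by
  have ha : 0 ≤ a := hb.trans hba
  have hsq := isComparable_sub_sq (psiDeriv_nonneg b) (psiDeriv_le_psiDeriv hN hb hba)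
  rw [psiDeriv_sq hN ha, psiDeriv_sq hN hb] at hsq
  have hdiff := ((hN.isComparable_mul_deriv_sub hd2 huc hC hb hba).sq zero_le_one
    (mul_nonneg (sub_nonneg.2 hba) (hN.deriv_nonneg ha))).mul_right
    (inv_nonneg.2 (mul_nonneg ha (hN.deriv_nonneg ha)))
  have hquot : ((a - b) * φ' a) ^ 2 * (a * φ' a)⁻¹ = φ' a / a * (a - b) ^ 2 := by
    rcases eq_or_ne a 0 with rfl | ha0
    · simp
    rcases eq_or_ne (φ' a) 0 with hφ | hφ
    · simp [hφ]
    · field_simp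
  rw [hquot, ← div_eq_mul_inv] at hdiff
  have hratio := (hN.isComparable_deriv_div hd2 huc hC (by linarith : 0 ≤ a + b) ha
    (by linarith) (by linarith)).mul_right (sq_nonneg (a - b))
  simpa only [one_pow, one_mul] using
    hsq.trans (hdiff.trans hratio (by norm_num) (by positivity)) (by norm_num) zero_le_one

theorem isComparable_psiDeriv_add_sq (hN : IsNFunction φ φ')
    (hd2 : ∀ t, 0 < t → HasDerivAt φ' (φ'' t) t) (huc : UniformlyConvex φ' φ'' c C)
    (hC : 0 ≤ C) {a b : ℝ} (ha : 0 ≤ a) (hb : 0 ≤ b) :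
    IsComparable (1 / (2 * 2 ^ C)) 4
      ((psiDeriv φ' a + psiDeriv φ' b) ^ 2) (φ' (a + b) / (a + b) * (a + b) ^ 2) := by
  rcases (add_nonneg ha hb).eq_or_lt with hab | hab
  · obtain ⟨rfl, rfl⟩ : a = 0 ∧ b = 0 := ⟨by linarith, by linarith⟩
    simp [IsComparable, psiDeriv]
  rw [show φ' (a + b) / (a + b) * (a + b) ^ 2 = (a + b) * φ' (a + b) by field_simp]
  have hψa := psiDeriv_nonneg (φ' := φ') a
  have hψb := psiDeriv_nonneg (φ' := φ') b
  constructor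
  · rw [one_div, inv_mul_le_iff₀ (by positivity)]
    rcases le_total b a with hba | hab'
    · have hapos : 0 < a := by linarith
      calc (a + b) * φ' (a + b) ≤ 2 * 2 ^ C * (a * φ' a) :=
            hN.mul_deriv_le_of_le_two_mul hd2 huc hC hapos hab.le (by linarith)
        _ = 2 * 2 ^ C * psiDeriv φ' a ^ 2 := by rw [psiDeriv_sq hN ha]
        _ ≤ 2 * 2 ^ C * (psiDeriv φ' a + psiDeriv φ' b) ^ 2 := by
            gcongr
            exact le_add_of_nonneg_right hψb
    · have hbpos : 0 < b := by linarith
      calc (a + b) * φ' (a + b) ≤ 2 * 2 ^ C * (b * φ' b) :=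
            hN.mul_deriv_le_of_le_two_mul hd2 huc hC hbpos hab.le (by linarith)
        _ = 2 * 2 ^ C * psiDeriv φ' b ^ 2 := by rw [psiDeriv_sq hN hb]
        _ ≤ 2 * 2 ^ C * (psiDeriv φ' a + psiDeriv φ' b) ^ 2 := by
            gcongr
            exact le_add_of_nonneg_left hψa
  · calc (psiDeriv φ' a + psiDeriv φ' b) ^ 2 ≤ (2 * psiDeriv φ' (a + b)) ^ 2 := by
          gcongr
          linarith [psiDeriv_le_psiDeriv hN ha (by linarith : a ≤ a + b),
              psiDeriv_le_psiDeriv hN hb (by linarith : b ≤ a + b)]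
      _ = 4 * ((a + b) * φ' (a + b)) := by rw [mul_pow, psiDeriv_sq hN hab.le]; norm_num

end Psi

noncomputable def derivQuotSq (φ' : ℝ → ℝ) (ξ η : ℝ) : ℝ :=
  φ' (|ξ| + |η|) / (|ξ| + |η|) * (ξ - η) ^ 2

section Coordinate

variable {φ φ' φ'' A : ℝ → ℝ} {c C : ℝ}

theorem derivQuotSq_nonneg (hN : IsNFunction φ φ') (ξ η : ℝ) : 0 ≤ derivQuotSq φ' ξ η :=
  mul_nonneg (div_nonneg (hN.deriv_nonneg (by positivity)) (by positivity)) (sq_nonneg _)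

theorem isComparable_deriv2_mul_sq (huc : UniformlyConvex φ' φ'' c C) (ξ η : ℝ) :
    IsComparable c C (φ'' (|ξ| + |η|) * (ξ - η) ^ 2) (derivQuotSq φ' ξ η) := by
  rcases eq_or_ne ξ η with rfl | hne
  · simp [IsComparable, derivQuotSq]
  have hm : 0 < |ξ| + |η| := (abs_pos.2 (sub_ne_zero.2 hne)).trans_le (abs_sub ξ η)
  obtain ⟨hlow, hupp⟩ := huc _ hm
  refine IsComparable.mul_right ⟨?_, ?_⟩ (sq_nonneg _)
  · rw [mul_div_assoc', div_le_iff₀ hm]; linarith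
  · rw [mul_div_assoc', le_div_iff₀ hm]; linarith

theorem isComparable_orthotropic (hog : OrthotropicGrowth φ'' A c C) (ξ η : ℝ) :
    IsComparable c C ((A ξ - A η) * (ξ - η)) (φ'' (|ξ| + |η|) * (ξ - η) ^ 2) := by
  obtain ⟨hlow, hupp⟩ := hog ξ η
  rw [sq_abs] at hlow
  refine ⟨hlow, ?_⟩
  calc (A ξ - A η) * (ξ - η) ≤ |A ξ - A η| * |ξ - η| := by rw [← abs_mul]; exact le_abs_self _
    _ ≤ C * (φ'' (|ξ| + |η|) * |ξ - η|) * |ξ - η| :=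
        mul_le_mul_of_nonneg_right hupp (abs_nonneg _)
    _ = C * (φ'' (|ξ| + |η|) * (ξ - η) ^ 2) := by rw [← sq_abs (ξ - η)]; ring

theorem isComparable_shiftN_abs (hN : IsNFunction φ φ')
    (hd2 : ∀ t, 0 < t → HasDerivAt φ' (φ'' t) t) (huc : UniformlyConvex φ' φ'' c C)
    (hC : 0 ≤ C) (ξ η : ℝ) :
    IsComparable (1 / (4 * 2 ^ C) * (1 / (2 * 2 ^ C))) (2 * 2 ^ C)
      (shiftN φ' |ξ| |ξ - η|) (derivQuotSq φ' ξ η) := by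
  have hη : |η| ≤ |ξ| + |ξ - η| := by simpa using abs_sub ξ (ξ - η)
  have hξη := abs_sub ξ η
  have hshift := isComparable_shiftN hN hd2 huc hC (abs_nonneg ξ) (abs_nonneg (ξ - η))
  rw [sq_abs] at hshift
  have hratio := (hN.isComparable_deriv_div hd2 huc hC (s := |ξ| + |η|)
    (t := |ξ| + |ξ - η|) (by positivity) (by positivity)
    (by linarith [abs_nonneg η]) (by linarith [abs_nonneg (ξ - η)])).mul_right (sq_nonneg (ξ - η))
  have hchain := hshift.trans hratio (by positivity) zero_le_one
  rwa [one_mul] at hchain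

theorem isComparable_Vof (hN : IsNFunction φ φ')
    (hd2 : ∀ t, 0 < t → HasDerivAt φ' (φ'' t) t) (huc : UniformlyConvex φ' φ'' c C)
    (hC : 0 ≤ C) (ξ η : ℝ) :
    IsComparable (min (1 / 4 * (1 / (2 * 2 ^ C))) (1 / (2 * 2 ^ C)))
      (max ((1 + C) ^ 2 * (2 * 2 ^ C)) 4) ((Vof φ' ξ - Vof φ' η) ^ 2) (derivQuotSq φ' ξ η) := by
  have hW : ∀ a b x : ℝ, 0 ≤ a → 0 ≤ b → 0 ≤ φ' (a + b) / (a + b) * x ^ 2 := fun a b x ha hb =>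
    mul_nonneg (div_nonneg (hN.deriv_nonneg (by linarith)) (by linarith)) (sq_nonneg _)
  set k : ℝ := min (1 / 4 * (1 / (2 * 2 ^ C))) (1 / (2 * 2 ^ C))
  set K : ℝ := max ((1 + C) ^ 2 * (2 * 2 ^ C)) 4
  have same : ∀ a b, 0 ≤ a → 0 ≤ b → IsComparable k K ((psiDeriv φ' a - psiDeriv φ' b) ^ 2)
      (φ' (a + b) / (a + b) * (a - b) ^ 2) := by
    intro a b ha hb
    rcases le_total b a with hba | hab
    · exact (isComparable_psiDeriv_sub_sq hN hd2 huc hC hb hba).mono (hW a b _ ha hb)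
        (min_le_left _ _) (le_max_left _ _)
    · rw [sub_sq_comm, add_comm a b, sub_sq_comm a b]
      exact (isComparable_psiDeriv_sub_sq hN hd2 huc hC ha hab).mono (hW b a _ hb ha)
        (min_le_left _ _) (le_max_left _ _)
  have mixed : ∀ a b, 0 ≤ a → 0 ≤ b → IsComparable k K ((psiDeriv φ' a + psiDeriv φ' b) ^ 2)
      (φ' (a + b) / (a + b) * (a + b) ^ 2) :=
    fun a b ha hb => (isComparable_psiDeriv_add_sq hN hd2 huc hC ha hb).mono (hW a b _ ha hb)
      (min_le_right _ _) (le_max_right _ _)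
  unfold derivQuotSq
  rcases le_total 0 ξ with hξ | hξ <;> rcases le_total 0 η with hη | hη
  · rw [Vof_of_nonneg hξ, Vof_of_nonneg hη, abs_of_nonneg hξ, abs_of_nonneg hη]
    exact same ξ η hξ hη
  · rw [Vof_of_nonneg hξ, Vof_of_nonpos hη, abs_of_nonneg hξ, abs_of_nonpos hη]
    convert mixed ξ (-η) hξ (neg_nonneg.2 hη) using 1 <;> ring
  · rw [Vof_of_nonpos hξ, Vof_of_nonneg hη, abs_of_nonpos hξ, abs_of_nonneg hη]
    convert mixed (-ξ) η (neg_nonneg.2 hξ) hη using 1 <;> ring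
  · rw [Vof_of_nonpos hξ, Vof_of_nonpos hη, abs_of_nonpos hξ, abs_of_nonpos hη]
    convert same (-ξ) (-η) (neg_nonneg.2 hξ) (neg_nonneg.2 hη) using 1 <;> ring

end Coordinate

noncomputable def lowerConst (c C : ℝ) : ℝ :=
  min (min (c * c) (min (1 / 4 * (1 / (2 * 2 ^ C))) (1 / (2 * 2 ^ C))))
    (min (1 / (4 * 2 ^ C) * (1 / (2 * 2 ^ C))) c)

noncomputable def upperConst (C : ℝ) : ℝ :=
  max (max (C * C) (max ((1 + C) ^ 2 * (2 * 2 ^ C)) 4)) (max (2 * 2 ^ C) C)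

theorem lowerConst_pos {c C : ℝ} (hc : 0 < c) : 0 < lowerConst c C := by
  unfold lowerConst; positivity

theorem lowerConst_le_upperConst {c C : ℝ} (hcC : c ≤ C) : lowerConst c C ≤ upperConst C :=
  calc lowerConst c C ≤ c := (min_le_right _ _).trans (min_le_right _ _)
    _ ≤ C := hcC
    _ ≤ upperConst C := (le_max_right _ _).trans (le_max_right _ _)

theorem isComparable_quantQ {c C : ℝ} (hc : 0 ≤ c) (hC : 0 ≤ C) {d : ℕ}
    {φ φ' φ'' A : Fin d → ℝ → ℝ} (hN : ∀ i, IsNFunction (φ i) (φ' i))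
    (hd2 : ∀ i, ∀ t, 0 < t → HasDerivAt (φ' i) (φ'' i t) t)
    (huc : ∀ i, UniformlyConvex (φ' i) (φ'' i) c C)
    (hog : ∀ i, OrthotropicGrowth (φ'' i) (A i) c C) (ξ η : Fin d → ℝ) (j : Fin 4) :
    IsComparable (lowerConst c C) (upperConst C) (quantQ d φ' φ'' A ξ η j)
      (∑ i, derivQuotSq (φ' i) (ξ i) (η i)) := by
  have hW := fun i => derivQuotSq_nonneg (hN i) (ξ i) (η i)
  fin_cases j
  · exact IsComparable.sum fun i _ => ((isComparable_orthotropic (hog i) _ _).trans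
      (isComparable_deriv2_mul_sq (huc i) _ _) hc hC).mono (hW i) (by simp [lowerConst])
      (by simp [upperConst])
  · exact IsComparable.sum fun i _ => (isComparable_Vof (hN i) (hd2 i) (huc i) hC _ _).mono
      (hW i) (by simp [lowerConst]) (by simp [upperConst])
  · exact IsComparable.sum fun i _ =>
      (isComparable_shiftN_abs (hN i) (hd2 i) (huc i) hC _ _).mono
      (hW i) (by simp [lowerConst]) (by simp [upperConst])
  · exact IsComparable.sum fun i _ => (isComparable_deriv2_mul_sq (huc i) _ _).mono
      (hW i) (by simp [lowerConst]) (by simp [upperConst])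

theorem statement0_general (c C D : ℝ) (hc : 0 < c) (hcC : c ≤ C) :
    ∃ c' C' : ℝ, 0 < c' ∧ c' ≤ C' ∧
      ∀ (d : ℕ) (φ φ' φ'' A : Fin d → ℝ → ℝ),
        (∀ i, IsNFunction (φ i) (φ' i)) →
        (∀ i, ContDiffOn ℝ 2 (φ i) (Set.Ioi 0)) →
        (∀ i, ∀ t : ℝ, 0 < t → HasDerivAt (φ i) (φ' i t) t) →
        (∀ i, ∀ t : ℝ, 0 < t → HasDerivAt (φ' i) (φ'' i t) t) →
        (∀ i, Delta2 (φ i) D) →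
        (∀ i, UniformlyConvex (φ' i) (φ'' i) c C) →
        (∀ i, Continuous (A i)) → (∀ i, A i 0 = 0) →
        (∀ i, OrthotropicGrowth (φ'' i) (A i) c C) →
        ∀ (ξ η : Fin d → ℝ) (j k : Fin 4),
          c' * quantQ d φ' φ'' A ξ η j ≤ quantQ d φ' φ'' A ξ η k ∧
          quantQ d φ' φ'' A ξ η k ≤ C' * quantQ d φ' φ'' A ξ η j := by
  have hC : 0 ≤ C := hc.le.trans hcC
  have hk := lowerConst_pos (C := C) hc
  have hkK := lowerConst_le_upperConst hcC
  have hK := hk.trans_le hkK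
  refine ⟨lowerConst c C / upperConst C, upperConst C / lowerConst c C, div_pos hk hK,
    div_le_div₀ hK.le hkK hk hkK, ?_⟩
  intro d φ φ' φ'' A hN _ _ hd2 _ huc _ _ hog ξ η j k
  have hcomp := isComparable_quantQ hc.le hC hN hd2 huc hog ξ η
  simpa only [div_eq_mul_inv, IsComparable] using (hcomp k).trans ((hcomp j).symm hk hK) hk.le hK.le

/-- Proposition "equivalences": under the orthotropic growth and
uniform convexity assumptions, the four quantities are pairwise comparable with
constants `c', C'` depending only on `c, C, D`. -/
theorem statement0 (c C D : ℝ) (hc : 0 < c) (hcC : c ≤ C) (hD : 0 < D) :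
    ∃ c' C' : ℝ, 0 < c' ∧ c' ≤ C' ∧
      ∀ (d : ℕ) (φ φ' φ'' A : Fin d → ℝ → ℝ),
        (∀ i, IsNFunction (φ i) (φ' i)) →
        (∀ i, ContDiffOn ℝ 2 (φ i) (Set.Ioi 0)) →
        (∀ i, ∀ t : ℝ, 0 < t → HasDerivAt (φ i) (φ' i t) t) →
        (∀ i, ∀ t : ℝ, 0 < t → HasDerivAt (φ' i) (φ'' i t) t) →
        (∀ i, Delta2 (φ i) D) →
        (∀ i, UniformlyConvex (φ' i) (φ'' i) c C) →
        (∀ i, Continuous (A i)) → (∀ i, A i 0 = 0) →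
        (∀ i, OrthotropicGrowth (φ'' i) (A i) c C) →
        ∀ (ξ η : Fin d → ℝ) (j k : Fin 4),
          c' * quantQ d φ' φ'' A ξ η j ≤ quantQ d φ' φ'' A ξ η k ∧
          quantQ d φ' φ'' A ξ η k ≤ C' * quantQ d φ' φ'' A ξ η j :=
  statement0_general c C D hc hcC
end

section
/- Let 0 < c ≤ C and let φ be an N-function that is C² on (0,∞), satisfies the Δ₂-condition with constant D, is uniformly convex with constants c, C, and suppose the pair (φ, A) satisfies the orthotropic growth conditions with constants c, C. Then there exist constants 0 < c' ≤ C', depending only on c, C, D, such that for all s, t ∈ ℝ: c' φ_{|s|}'(|s − t|) ≤ |A(s) − A(t)| ≤ C' φ_{|s|}'(|s − t|), where φ_a'(r) = (r/(a+r)) φ'(a+r) denotes the derivative of the shifted N-function. -/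
open MeasureTheory

/- ### Auxiliary lemmas -/

lemma IsNFunction.deriv_nonneg_s1 {φ φ' : ℝ → ℝ} (N : IsNFunction φ φ') {y : ℝ} (hy : 0 ≤ y) :
    0 ≤ φ' y := by
  have := N.deriv_mono (Set.self_mem_Ici) (Set.mem_Ici.mpr hy) hy
  rwa [N.deriv_zero] at this

lemma IsNFunction.intIntegrable {φ φ' : ℝ → ℝ} (N : IsNFunction φ φ') {p q : ℝ}
    (hp : 0 ≤ p) (hpq : p ≤ q) : IntervalIntegrable φ' volume p q := by
  apply MonotoneOn.intervalIntegrable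
  apply N.deriv_mono.mono
  rw [Set.uIcc_of_le hpq]
  exact fun y hy => le_trans hp hy.1

/-- The key doubling estimate `2 φ'(2v) ≤ D² φ'(v)` coming from Δ₂. -/
lemma IsNFunction.doubling {φ φ' : ℝ → ℝ} (N : IsNFunction φ φ') {D : ℝ} (hD : 0 < D)
    (hΔ : Delta2 φ D) {u : ℝ} (hu : 0 < u) : 2 * φ' (2 * u) ≤ D ^ 2 * φ' u := by
  have h1 : φ u ≤ u * φ' u := by
    rw [N.eq_integral u hu.le]
    calc ∫ s in (0:ℝ)..u, φ' s ≤ ∫ s in (0:ℝ)..u, φ' u := by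
          apply intervalIntegral.integral_mono_on hu.le (N.intIntegrable le_rfl hu.le)
            intervalIntegrable_const
          intro y hy
          exact N.deriv_mono (Set.mem_Ici.mpr hy.1) (Set.mem_Ici.mpr hu.le) hy.2
      _ = u * φ' u := by simp [mul_comm]
  have h2 : 2 * u * φ' (2 * u) ≤ φ (4 * u) := by
    rw [N.eq_integral (4 * u) (by linarith)]
    have hsplit := intervalIntegral.integral_add_adjacent_intervals
      (N.intIntegrable (le_refl (0:ℝ)) (by linarith : (0:ℝ) ≤ 2 * u))
      (N.intIntegrable (by linarith : (0:ℝ) ≤ 2 * u) (by linarith : 2 * u ≤ 4 * u))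
    have hpos1 : 0 ≤ ∫ s in (0:ℝ)..(2 * u), φ' s :=
      intervalIntegral.integral_nonneg (by linarith) (fun y hy => N.deriv_nonneg_s1 hy.1)
    have hge : 2 * u * φ' (2 * u) ≤ ∫ s in (2 * u)..(4 * u), φ' s := by
      have hmono : ∫ s in (2 * u)..(4 * u), φ' (2 * u) ≤ ∫ s in (2 * u)..(4 * u), φ' s := by
        apply intervalIntegral.integral_mono_on (by linarith) intervalIntegrable_const
          (N.intIntegrable (by linarith) (by linarith))
        intro y hy
        exact N.deriv_mono (Set.mem_Ici.mpr (by linarith)) (Set.mem_Ici.mpr (by linarith [hy.1]))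
          hy.1
      have hconst : ∫ s in (2 * u)..(4 * u), (fun _ => φ' (2 * u)) s
          = (4 * u - 2 * u) * φ' (2 * u) := by
        simp [smul_eq_mul]
      rw [hconst] at hmono
      linarith
    linarith [hsplit]
  have h3 : φ (4 * u) ≤ D ^ 2 * φ u := by
    have hA := hΔ (2 * u) (by linarith)
    have hB := hΔ u hu
    have h4 : φ (2 * (2 * u)) = φ (4 * u) := by ring_nf
    rw [h4] at hA
    nlinarith
  have h5 : D ^ 2 * φ u ≤ D ^ 2 * (u * φ' u) := by nlinarith [sq_nonneg D]
  have : 2 * u * φ' (2 * u) ≤ D ^ 2 * (u * φ' u) := by linarith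
  have h6 : u * (2 * φ' (2 * u)) ≤ u * (D ^ 2 * φ' u) := by linarith [this]
  exact le_of_mul_le_mul_left (by linarith [h6]) hu

/-- Lower-bound core inequality. -/
lemma core_low (c D r x b P' Px P'' AA : ℝ) (hc : 0 < c) (hD : 0 < D) (hr : 0 < r)
    (hx : 0 < x) (hP'' : 0 < P'')
    (e1 : c * (P'' * r) ≤ AA) (e2 : c * P' ≤ b * P'') (e3 : 2 * Px ≤ D ^ 2 * P')
    (hb2x : b ≤ 2 * x) :
    c ^ 2 / D ^ 2 * (r / x * Px) ≤ AA := by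
  have key : c ^ 2 * (r * Px) ≤ D ^ 2 * (x * AA) := by
    have H1 := mul_le_mul_of_nonneg_left e1 (show (0:ℝ) ≤ D ^ 2 * x by positivity)
    have H2 := mul_le_mul_of_nonneg_left e2 (show (0:ℝ) ≤ c * D ^ 2 * r by positivity)
    have H3 := mul_le_mul_of_nonneg_left hb2x (show (0:ℝ) ≤ c * r * D ^ 2 * P'' by positivity)
    have H4 := mul_le_mul_of_nonneg_left e3 (show (0:ℝ) ≤ c ^ 2 * r by positivity)
    nlinarith [H1, H2, H3, H4]
  have heq : c ^ 2 / D ^ 2 * (r / x * Px) = c ^ 2 * (r * Px) / (D ^ 2 * x) := by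
    field_simp
  rw [heq, div_le_iff₀ (by positivity)]
  nlinarith [key]

/-- Upper-bound core inequality. -/
lemma core_up (C D r x b P' Px P'' AA : ℝ) (hC : 0 < C) (hD : 0 < D) (hr : 0 < r)
    (hx : 0 < x) (hP'' : 0 < P'')
    (e1 : AA ≤ C * (P'' * r)) (e2 : b * P'' ≤ C * P') (e3 : 2 * P' ≤ D ^ 2 * Px)
    (hx2b : x ≤ 2 * b) :
    AA ≤ C ^ 2 * D ^ 2 * (r / x * Px) := by
  have key : x * AA ≤ C ^ 2 * D ^ 2 * (r * Px) := by
    have H1 := mul_le_mul_of_nonneg_left e1 hx.le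
    have H2 := mul_le_mul_of_nonneg_left hx2b (show (0:ℝ) ≤ C * r * P'' by positivity)
    have H3 := mul_le_mul_of_nonneg_left e2 (show (0:ℝ) ≤ 2 * C * r by positivity)
    have H4 := mul_le_mul_of_nonneg_left e3 (show (0:ℝ) ≤ C ^ 2 * r by positivity)
    nlinarith [H1, H2, H3, H4]
  have heq : C ^ 2 * D ^ 2 * (r / x * Px) = C ^ 2 * D ^ 2 * (r * Px) / x := by
    field_simp
  rw [heq, le_div_iff₀ hx]
  nlinarith [key]

/-- `|A(s) − A(t)| ≂ φ_{|s|}'(|s − t|)` with constants depending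
only on `c, C, D`. -/
theorem statement1 (c C D : ℝ) (hc : 0 < c) (hcC : c ≤ C) (hD : 0 < D) :
    ∃ c' C' : ℝ, 0 < c' ∧ c' ≤ C' ∧
      ∀ (φ φ' φ'' A : ℝ → ℝ),
        IsNFunction φ φ' →
        ContDiffOn ℝ 2 φ (Set.Ioi 0) →
        (∀ t : ℝ, 0 < t → HasDerivAt φ (φ' t) t) →
        (∀ t : ℝ, 0 < t → HasDerivAt φ' (φ'' t) t) →
        Delta2 φ D →
        UniformlyConvex φ' φ'' c C →
        Continuous A → A 0 = 0 →
        OrthotropicGrowth φ'' A c C →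
        ∀ s t : ℝ,
          c' * shiftDeriv φ' |s| |s - t| ≤ |A s - A t| ∧
          |A s - A t| ≤ C' * shiftDeriv φ' |s| |s - t| := by
  have hC : 0 < C := hc.trans_le hcC
  refine ⟨c ^ 2 / D ^ 2, c ^ 2 / D ^ 2 + C ^ 2 * D ^ 2, by positivity, ?_, ?_⟩
  · have : (0:ℝ) ≤ C ^ 2 * D ^ 2 := by positivity
    linarith
  intro φ φ' φ'' A N _ _ _ hΔ hUC _ _ hG s t
  by_cases hst : s = t
  · subst hst
    simp [shiftDeriv]
  -- notation
  have hr : 0 < |s - t| := abs_pos.mpr (sub_ne_zero.mpr hst)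
  have hrb : |s - t| ≤ |s| + |t| := by
    rw [sub_eq_add_neg]
    exact (abs_add_le _ _).trans (by rw [abs_neg])
  have hb : 0 < |s| + |t| := lt_of_lt_of_le hr hrb
  have hx : 0 < |s| + |s - t| := by positivity
  have hb2x : |s| + |t| ≤ 2 * (|s| + |s - t|) := by
    have ht : |t| ≤ |s| + |s - t| := by
      have h0 : t = s - (s - t) := by ring
      calc |t| = |s - (s - t)| := by rw [← h0]
        _ ≤ |s| + |s - t| := by
            rw [sub_eq_add_neg]
            exact (abs_add_le _ _).trans (by rw [abs_neg])
    have hs : |s| ≤ |s| + |s - t| := by linarith [hr]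
    linarith
  have hx2b : |s| + |s - t| ≤ 2 * (|s| + |t|) := by
    have hs : |s| ≤ |s| + |t| := by linarith [abs_nonneg t]
    linarith
  -- growth conditions
  obtain ⟨g1, g2⟩ := hG s t
  have habs : (A s - A t) * (s - t) ≤ |A s - A t| * |s - t| := by
    calc (A s - A t) * (s - t) ≤ |(A s - A t) * (s - t)| := le_abs_self _
      _ = |A s - A t| * |s - t| := abs_mul _ _
  have e1 : c * (φ'' (|s| + |t|) * |s - t|) ≤ |A s - A t| := by
    have h' : c * (φ'' (|s| + |t|) * |s - t|) * |s - t| ≤ |A s - A t| * |s - t| := by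
      nlinarith [g1, habs]
    exact le_of_mul_le_mul_right h' hr
  -- uniform convexity at b
  obtain ⟨e2, e2C⟩ := hUC (|s| + |t|) hb
  have hφ'b : 0 < φ' (|s| + |t|) := N.deriv_pos _ hb
  have hP'' : 0 < φ'' (|s| + |t|) := by
    have h0 : 0 < (|s| + |t|) * φ'' (|s| + |t|) := lt_of_lt_of_le (by positivity) e2
    rcases mul_pos_iff.mp h0 with ⟨_, h⟩ | ⟨h, _⟩
    · exact h
    · linarith
  -- doubling comparisons
  have mono := N.deriv_mono
  have e3 : 2 * φ' (|s| + |s - t|) ≤ D ^ 2 * φ' (|s| + |t|) := by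
    have m1 : φ' (|s| + |s - t|) ≤ φ' (2 * (|s| + |t|)) :=
      mono (Set.mem_Ici.mpr hx.le) (Set.mem_Ici.mpr (by linarith)) hx2b
    have m2 := N.doubling hD hΔ hb
    linarith
  have e3u : 2 * φ' (|s| + |t|) ≤ D ^ 2 * φ' (|s| + |s - t|) := by
    have m1 : φ' (|s| + |t|) ≤ φ' (2 * (|s| + |s - t|)) :=
      mono (Set.mem_Ici.mpr hb.le) (Set.mem_Ici.mpr (by linarith)) hb2x
    have m2 := N.doubling hD hΔ hx
    linarith
  constructor
  · show c ^ 2 / D ^ 2 * shiftDeriv φ' |s| |s - t| ≤ |A s - A t|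
    simp only [shiftDeriv]
    exact core_low c D (|s - t|) (|s| + |s - t|) (|s| + |t|) (φ' (|s| + |t|))
      (φ' (|s| + |s - t|)) (φ'' (|s| + |t|)) (|A s - A t|) hc hD hr hx hP'' e1 e2 e3 hb2x
  · show |A s - A t| ≤ (c ^ 2 / D ^ 2 + C ^ 2 * D ^ 2) * shiftDeriv φ' |s| |s - t|
    simp only [shiftDeriv]
    have hup := core_up C D (|s - t|) (|s| + |s - t|) (|s| + |t|) (φ' (|s| + |t|))
      (φ' (|s| + |s - t|)) (φ'' (|s| + |t|)) (|A s - A t|) hC hD hr hx hP'' g2 e2C e3u hx2b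
    have hsd : 0 ≤ |s - t| / (|s| + |s - t|) * φ' (|s| + |s - t|) := by
      have := N.deriv_pos _ hx
      positivity
    nlinarith [hup, hsd, mul_nonneg (le_of_lt (div_pos (pow_pos hc 2) (pow_pos hD 2))) hsd]
end

section
/- Let Φ be an N-function such that both Φ and its complementary function Φ* satisfy the Δ₂-condition. Then the family of shifted N-functions {Φ_a}_{a ≥ 0} satisfies the Δ₂-condition uniformly in the shift: there exists a constant D', depending only on the Δ₂-constants of Φ and Φ*, such that Φ_a(2t) ≤ D' Φ_a(t) for all a ≥ 0 and all t > 0. -/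
open MeasureTheory

/-- The (generalized) inverse `(Φ')⁻¹(t) = sup {s ≥ 0 : Φ'(s) ≤ t}`. -/
noncomputable def invDeriv (Φ' : ℝ → ℝ) (t : ℝ) : ℝ := sSup {s : ℝ | 0 ≤ s ∧ Φ' s ≤ t}

/-- The complementary N-function `Φ*(t) = ∫₀ᵗ (Φ')⁻¹(s) ds`. -/
noncomputable def complementary (Φ' : ℝ → ℝ) (t : ℝ) : ℝ := ∫ s in (0:ℝ)..t, invDeriv Φ' s

private lemma frac_mono {a s u : ℝ} (ha : 0 ≤ a) (hs : 0 ≤ s) (hsu : s ≤ u) :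
    s / (a + s) ≤ u / (a + u) := by
  rcases eq_or_lt_of_le (by linarith : (0:ℝ) ≤ a + s) with h | h
  · rw [← h, div_zero]
    exact div_nonneg (hs.trans hsu) (by linarith)
  · have h2 : 0 < a + u := by linarith
    rw [div_le_div_iff₀ h h2]
    nlinarith

private lemma deriv_nonneg {Φ Φ' : ℝ → ℝ} (hN : IsNFunction Φ Φ') :
    ∀ s : ℝ, 0 ≤ s → 0 ≤ Φ' s := by
  intro s hs
  have := hN.deriv_mono (Set.self_mem_Ici) (Set.mem_Ici.mpr hs) hs
  rw [hN.deriv_zero] at this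
  exact this

private lemma shiftDeriv_monoOn {Φ Φ' : ℝ → ℝ} (hN : IsNFunction Φ Φ') {a : ℝ} (ha : 0 ≤ a) :
    MonotoneOn (shiftDeriv Φ' a) (Set.Ici 0) := by
  intro s hs u hu hsu
  have hs0 : (0:ℝ) ≤ s := hs
  have hu0 : (0:ℝ) ≤ u := hu
  unfold shiftDeriv
  refine mul_le_mul (frac_mono ha hs0 hsu)
    (hN.deriv_mono (Set.mem_Ici.mpr (by linarith)) (Set.mem_Ici.mpr (by linarith)) (by linarith))
    (deriv_nonneg hN _ (by linarith)) (div_nonneg hu0 (by linarith))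

private lemma integrable_of_mono {f : ℝ → ℝ} (hm : MonotoneOn f (Set.Ici 0)) {c d : ℝ}
    (hc : 0 ≤ c) (hcd : c ≤ d) : IntervalIntegrable f volume c d := by
  apply MonotoneOn.intervalIntegrable
  apply hm.mono
  rw [Set.uIcc_of_le hcd]
  exact fun x hx => Set.mem_Ici.mpr (hc.trans hx.1)

private lemma integral_le_mul {f : ℝ → ℝ} (hm : MonotoneOn f (Set.Ici 0)) {b : ℝ} (hb : 0 ≤ b) :
    ∫ s in (0:ℝ)..b, f s ≤ b * f b := by
  have h := intervalIntegral.integral_mono_on hb (integrable_of_mono hm le_rfl hb)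
      intervalIntegrable_const
      (fun x hx => hm (Set.mem_Ici.mpr hx.1) (Set.mem_Ici.mpr hb) hx.2)
  simpa using h

private lemma mul_le_integral {f : ℝ → ℝ} (hm : MonotoneOn f (Set.Ici 0))
    (hnn : ∀ s : ℝ, 0 ≤ s → 0 ≤ f s) {b : ℝ} (hb : 0 < b) :
    b / 2 * f (b / 2) ≤ ∫ s in (0:ℝ)..b, f s := by
  have h2 : (0:ℝ) ≤ b / 2 := by linarith
  have hsplit : (∫ s in (0:ℝ)..(b/2), f s) + (∫ s in (b/2)..b, f s)
      = ∫ s in (0:ℝ)..b, f s :=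
    intervalIntegral.integral_add_adjacent_intervals (integrable_of_mono hm le_rfl h2)
      (integrable_of_mono hm h2 (by linarith))
  have hA : 0 ≤ ∫ s in (0:ℝ)..(b/2), f s :=
    intervalIntegral.integral_nonneg h2 (fun x hx => hnn x hx.1)
  have hB : b / 2 * f (b / 2) ≤ ∫ s in (b/2)..b, f s := by
    have h := intervalIntegral.integral_mono_on (by linarith : b/2 ≤ b)
      intervalIntegrable_const (integrable_of_mono hm h2 (by linarith))
      (fun x hx => hm (Set.mem_Ici.mpr h2) (Set.mem_Ici.mpr (h2.trans hx.1)) hx.1)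
    rw [intervalIntegral.integral_const, smul_eq_mul] at h
    have e : b - b/2 = b/2 := by ring
    rw [e] at h
    exact h
  linarith

private lemma deriv_delta2 {Φ Φ' : ℝ → ℝ} (hN : IsNFunction Φ Φ') {D : ℝ} (hD : 0 < D)
    (hΔ : Delta2 Φ D) {t : ℝ} (ht : 0 < t) : Φ' (2 * t) ≤ D ^ 2 * Φ' t := by
  have hnn := deriv_nonneg hN
  have hPhi_le : Φ t ≤ t * Φ' t := by
    rw [hN.eq_integral t ht.le]
    exact integral_le_mul hN.deriv_mono ht.le
  have h1 : 2 * t * Φ' (2 * t) ≤ Φ (4 * t) := by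
    rw [hN.eq_integral (4 * t) (by linarith)]
    have h := mul_le_integral hN.deriv_mono hnn (by linarith : (0:ℝ) < 4 * t)
    have e : 4 * t / 2 = 2 * t := by ring
    rw [e] at h
    exact h
  have h2 : Φ (4 * t) ≤ D * Φ (2 * t) := by
    have h := hΔ (2 * t) (by linarith)
    rwa [show 2 * (2 * t) = 4 * t by ring] at h
  have h3 : Φ (2 * t) ≤ D * Φ t := hΔ t ht
  have h4 : D * Φ (2 * t) ≤ D * (D * Φ t) := mul_le_mul_of_nonneg_left h3 hD.le
  have h5 : D * (D * Φ t) ≤ D * (D * (t * Φ' t)) :=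
    mul_le_mul_of_nonneg_left (mul_le_mul_of_nonneg_left hPhi_le hD.le) hD.le
  have h6 : 2 * t * Φ' (2 * t) ≤ D * (D * (t * Φ' t)) := by linarith
  nlinarith [hnn (2 * t) (by linarith : (0:ℝ) ≤ 2 * t), hnn t ht.le, sq_nonneg D,
    mul_nonneg (mul_nonneg (sq_nonneg D) ht.le) (hnn t ht.le)]

/-- if `Φ` and `Φ*` satisfy the Δ₂-condition, then the shifted
N-functions `Φ_a` satisfy the Δ₂-condition uniformly in the shift `a ≥ 0`, with a
constant depending only on the Δ₂-constants of `Φ` and `Φ*`. -/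
theorem statement2 (D Dstar : ℝ) (hD : 0 < D) (hDstar : 0 < Dstar) :
    ∃ D' : ℝ, 0 < D' ∧
      ∀ (Φ Φ' : ℝ → ℝ),
        IsNFunction Φ Φ' →
        Delta2 Φ D →
        Delta2 (complementary Φ') Dstar →
        ∀ a : ℝ, 0 ≤ a → ∀ t : ℝ, 0 < t →
          shiftN Φ' a (2 * t) ≤ D' * shiftN Φ' a t := by
  refine ⟨16 * D ^ 4, by positivity, ?_⟩
  intro Φ Φ' hN hΔ _ a ha t ht
  have hnn := deriv_nonneg hN
  have hmono : MonotoneOn (shiftDeriv Φ' a) (Set.Ici 0) := shiftDeriv_monoOn hN ha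
  have hψnn : ∀ s : ℝ, 0 ≤ s → 0 ≤ shiftDeriv Φ' a s := fun s hs =>
    mul_nonneg (div_nonneg hs (by linarith)) (hnn _ (by linarith))
  have hup : shiftN Φ' a (2 * t) ≤ 2 * t * shiftDeriv Φ' a (2 * t) := by
    rw [shiftN]
    exact integral_le_mul hmono (by linarith)
  have hlow : t / 2 * shiftDeriv Φ' a (t / 2) ≤ shiftN Φ' a t := by
    rw [shiftN]
    exact mul_le_integral hmono hψnn ht
  have hfrac : 2 * t / (a + 2 * t) ≤ 4 * (t / 2) / (a + t / 2) := by
    rw [div_le_div_iff₀ (by linarith) (by linarith)]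
    nlinarith [sq_nonneg t]
  have hDp : Φ' (a + 2 * t) ≤ D ^ 4 * Φ' (a + t / 2) := by
    have hu : 0 < a + t / 2 := by linarith
    have e1 : Φ' (2 * (a + t / 2)) ≤ D ^ 2 * Φ' (a + t / 2) := deriv_delta2 hN hD hΔ hu
    have e2 : Φ' (2 * (2 * (a + t / 2))) ≤ D ^ 2 * Φ' (2 * (a + t / 2)) :=
      deriv_delta2 hN hD hΔ (by linarith)
    have e3 : Φ' (a + 2 * t) ≤ Φ' (2 * (2 * (a + t / 2))) :=
      hN.deriv_mono (Set.mem_Ici.mpr (by linarith)) (Set.mem_Ici.mpr (by linarith)) (by linarith)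
    have e4 : D ^ 2 * Φ' (2 * (2 * (a + t / 2))) ≤ D ^ 2 * (D ^ 2 * Φ' (2 * (a + t / 2))) :=
      mul_le_mul_of_nonneg_left e2 (sq_nonneg D)
    nlinarith [sq_nonneg D, hnn (2 * (a + t / 2)) (by linarith), hnn (a + t / 2) hu.le,
      mul_le_mul_of_nonneg_left e1 (mul_nonneg (sq_nonneg D) (sq_nonneg D))]
  have hkey : shiftDeriv Φ' a (2 * t) ≤ 4 * D ^ 4 * shiftDeriv Φ' a (t / 2) := by
    calc shiftDeriv Φ' a (2 * t) = 2 * t / (a + 2 * t) * Φ' (a + 2 * t) := rfl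
      _ ≤ 4 * (t / 2) / (a + t / 2) * (D ^ 4 * Φ' (a + t / 2)) :=
          mul_le_mul hfrac hDp (hnn _ (by linarith))
            (div_nonneg (by linarith) (by linarith))
      _ = 4 * D ^ 4 * (t / 2 / (a + t / 2) * Φ' (a + t / 2)) := by ring
      _ = 4 * D ^ 4 * shiftDeriv Φ' a (t / 2) := rfl
  calc shiftN Φ' a (2 * t) ≤ 2 * t * shiftDeriv Φ' a (2 * t) := hup
    _ ≤ 2 * t * (4 * D ^ 4 * shiftDeriv Φ' a (t / 2)) :=
        mul_le_mul_of_nonneg_left hkey (by linarith)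
    _ = 16 * D ^ 4 * (t / 2 * shiftDeriv Φ' a (t / 2)) := by ring
    _ ≤ 16 * D ^ 4 * shiftN Φ' a t := mul_le_mul_of_nonneg_left hlow (by positivity)
end

section
/- Let Φ be an N-function that is C² on (0,∞), satisfies the Δ₂-condition with constant D, and is uniformly convex with constants 0 < c ≤ C. Then there exist constants 0 < c' ≤ C', depending only on c, C, D, such that for all s, t ∈ ℝ with s ≠ t: c' Φ_{|s|}'(|s − t|) ≤ Φ''(|s| + |t|) |s − t| ≤ C' Φ_{|s|}'(|s − t|), where Φ_a'(r) = (r/(a+r)) Φ'(a+r) is the derivative of the shifted N-function. -/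
open MeasureTheory

lemma nfun_deriv_nonneg {Φ Φ' : ℝ → ℝ} (hN : IsNFunction Φ Φ') {t : ℝ} (ht : 0 ≤ t) :
    0 ≤ Φ' t := by
  have := hN.deriv_mono (Set.mem_Ici.mpr le_rfl) (Set.mem_Ici.mpr ht) ht
  rwa [hN.deriv_zero] at this

lemma nfun_intble {Φ Φ' : ℝ → ℝ} (hN : IsNFunction Φ Φ') {a b : ℝ} (ha : 0 ≤ a) (hb : 0 ≤ b) :
    IntervalIntegrable Φ' volume a b := by
  apply MonotoneOn.intervalIntegrable
  apply hN.deriv_mono.mono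
  intro x hx
  rcases Set.mem_uIcc.mp hx with h | h
  · exact Set.mem_Ici.mpr (le_trans ha h.1)
  · exact Set.mem_Ici.mpr (le_trans hb h.1)

lemma nfun_low {Φ Φ' : ℝ → ℝ} (hN : IsNFunction Φ Φ') {t : ℝ} (ht : 0 < t) :
    Φ t ≤ t * Φ' t := by
  rw [hN.eq_integral t ht.le]
  have h := intervalIntegral.integral_mono_on ht.le (nfun_intble hN le_rfl ht.le)
    intervalIntegrable_const
    (fun x hx => hN.deriv_mono (Set.mem_Ici.mpr hx.1) (Set.mem_Ici.mpr ht.le) hx.2)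
  simpa using h

lemma nfun_high {Φ Φ' : ℝ → ℝ} (hN : IsNFunction Φ Φ') {t : ℝ} (ht : 0 < t) :
    t * Φ' t ≤ Φ (2 * t) := by
  rw [hN.eq_integral (2 * t) (by linarith)]
  have hsplit := intervalIntegral.integral_add_adjacent_intervals
    (nfun_intble hN le_rfl ht.le) (nfun_intble hN ht.le (by linarith : (0:ℝ) ≤ 2 * t))
    (μ := volume)
  have h1 : (0:ℝ) ≤ ∫ s in (0:ℝ)..t, Φ' s :=
    intervalIntegral.integral_nonneg ht.le (fun x hx => nfun_deriv_nonneg hN hx.1)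
  have h2 : t * Φ' t ≤ ∫ s in t..(2*t), Φ' s := by
    have h := intervalIntegral.integral_mono_on (by linarith : t ≤ 2 * t)
      intervalIntegrable_const (nfun_intble hN ht.le (by linarith))
      (fun x hx => hN.deriv_mono (Set.mem_Ici.mpr ht.le)
        (Set.mem_Ici.mpr (le_trans ht.le hx.1)) hx.1)
    rw [intervalIntegral.integral_const, show (2*t - t : ℝ) = t by ring, smul_eq_mul] at h
    exact h
  linarith

lemma nfun_double {Φ Φ' : ℝ → ℝ} {D : ℝ} (hN : IsNFunction Φ Φ')
    (hΔ : Delta2 Φ D) (hD : 0 < D) {t : ℝ} (ht : 0 < t) :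
    2 * Φ' (2 * t) ≤ D ^ 2 * Φ' t := by
  have h0 := nfun_high hN (by linarith : (0:ℝ) < 2 * t)
  have h2 : Φ (2 * (2 * t)) ≤ D * Φ (2 * t) := hΔ (2 * t) (by linarith)
  have h3 : Φ (2 * t) ≤ D * Φ t := hΔ t ht
  have h4 : Φ t ≤ t * Φ' t := nfun_low hN ht
  have key : (2 * Φ' (2 * t)) * t ≤ (D ^ 2 * Φ' t) * t := by nlinarith
  exact le_of_mul_le_mul_right key ht

lemma nfun_core {Φ Φ' Φ'' : ℝ → ℝ} {c C D : ℝ} (hc : 0 < c) (hcC : c ≤ C) (hD : 0 < D)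
    (hN : IsNFunction Φ Φ') (hΔ : Delta2 Φ D) (hUC : UniformlyConvex Φ' Φ'' c C)
    {u v r : ℝ} (hu : 0 < u) (hv : 0 < v) (hr : 0 < r)
    (huv1 : u ≤ 2 * v) (huv2 : v ≤ 2 * u) :
    min (c / D ^ 2) (C * D ^ 2) * (r / v * Φ' v) ≤ Φ'' u * r ∧
    Φ'' u * r ≤ C * D ^ 2 * (r / v * Φ' v) := by
  have hC : 0 < C := lt_of_lt_of_le hc hcC
  have hD2 : (0:ℝ) < D ^ 2 := by positivity
  have h1 := (hUC u hu).1
  have h2 := (hUC u hu).2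
  have hΦ'u : 0 < Φ' u := hN.deriv_pos u hu
  have hΦ'v : 0 < Φ' v := hN.deriv_pos v hv
  have hΦ'half : 0 ≤ Φ' (v / 2) := nfun_deriv_nonneg hN (by linarith)
  have hdbl_v : 2 * Φ' (2 * v) ≤ D ^ 2 * Φ' v := nfun_double hN hΔ hD hv
  have hdbl_half : 2 * Φ' v ≤ D ^ 2 * Φ' (v / 2) := by
    have h := nfun_double hN hΔ hD (t := v / 2) (by linarith)
    rwa [show 2 * (v / 2) = v by ring] at h
  have hmono1 : Φ' u ≤ Φ' (2 * v) :=
    hN.deriv_mono (Set.mem_Ici.mpr hu.le) (Set.mem_Ici.mpr (by linarith)) huv1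
  have hmono2 : Φ' (v / 2) ≤ Φ' u :=
    hN.deriv_mono (Set.mem_Ici.mpr (by linarith)) (Set.mem_Ici.mpr hu.le) (by linarith)
  constructor
  · have hle : min (c / D ^ 2) (C * D ^ 2) ≤ c / D ^ 2 := min_le_left _ _
    have keyL : c * Φ' v * u ≤ D ^ 2 * (u * Φ'' u) * v := by
      nlinarith [mul_le_mul_of_nonneg_left huv1 (mul_nonneg hc.le hΦ'v.le),
        mul_le_mul_of_nonneg_right hdbl_half (mul_nonneg hc.le hv.le),
        mul_le_mul_of_nonneg_right hmono2 (by positivity : (0:ℝ) ≤ c * D ^ 2 * v),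
        mul_le_mul_of_nonneg_right h1 (by positivity : (0:ℝ) ≤ D ^ 2 * v)]
    have key : c / D ^ 2 * Φ' v ≤ Φ'' u * v := by
      rw [div_mul_eq_mul_div, div_le_iff₀ hD2]
      exact le_of_mul_le_mul_right
        (show (c * Φ' v) * u ≤ (Φ'' u * v * D ^ 2) * u by nlinarith [keyL]) hu
    rw [show min (c / D ^ 2) (C * D ^ 2) * (r / v * Φ' v)
        = min (c / D ^ 2) (C * D ^ 2) * r * Φ' v / v by ring, div_le_iff₀ hv]
    nlinarith [mul_le_mul_of_nonneg_right key hr.le,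
      mul_le_mul_of_nonneg_right hle (mul_nonneg hr.le hΦ'v.le)]
  · have key : Φ'' u * v ≤ C * D ^ 2 * Φ' v := by
      have keyU : (Φ'' u * v) * u ≤ (C * D ^ 2 * Φ' v) * u := by
        nlinarith [mul_le_mul_of_nonneg_right h2 hv.le,
          mul_le_mul_of_nonneg_right hmono1 (by positivity : (0:ℝ) ≤ 2 * C * v),
          mul_le_mul_of_nonneg_right hdbl_v (by positivity : (0:ℝ) ≤ C * v),
          mul_le_mul_of_nonneg_left huv2 (by positivity : (0:ℝ) ≤ C * D ^ 2 * Φ' v)]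
      exact le_of_mul_le_mul_right keyU hu
    rw [show C * D ^ 2 * (r / v * Φ' v) = C * D ^ 2 * Φ' v * r / v by ring, le_div_iff₀ hv]
    nlinarith [mul_le_mul_of_nonneg_right key hr.le]

/-- `Φ''(|s| + |t|)|s − t| ≂ Φ_{|s|}'(|s − t|)` with constants
depending only on `c, C, D`. -/
theorem statement3 (c C D : ℝ) (hc : 0 < c) (hcC : c ≤ C) (hD : 0 < D) :
    ∃ c' C' : ℝ, 0 < c' ∧ c' ≤ C' ∧
      ∀ (Φ Φ' Φ'' : ℝ → ℝ),
        IsNFunction Φ Φ' →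
        ContDiffOn ℝ 2 Φ (Set.Ioi 0) →
        (∀ t : ℝ, 0 < t → HasDerivAt Φ (Φ' t) t) →
        (∀ t : ℝ, 0 < t → HasDerivAt Φ' (Φ'' t) t) →
        Delta2 Φ D →
        UniformlyConvex Φ' Φ'' c C →
        ∀ s t : ℝ, s ≠ t →
          c' * shiftDeriv Φ' |s| |s - t| ≤ Φ'' (|s| + |t|) * |s - t| ∧
          Φ'' (|s| + |t|) * |s - t| ≤ C' * shiftDeriv Φ' |s| |s - t| := by
  have hC : 0 < C := lt_of_lt_of_le hc hcC
  have hD2 : (0:ℝ) < D ^ 2 := by positivity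
  refine ⟨min (c / D ^ 2) (C * D ^ 2), C * D ^ 2, by positivity, min_le_right _ _, ?_⟩
  intro Φ Φ' Φ'' hN _ _ _ hΔ hUC s t hst
  have hr : 0 < |s - t| := abs_pos.mpr (sub_ne_zero.mpr hst)
  have ha : 0 ≤ |s| := abs_nonneg s
  have hb : 0 ≤ |t| := abs_nonneg t
  have hrab : |s - t| ≤ |s| + |t| := abs_sub s t
  have hba : |t| ≤ |s| + |s - t| := by
    calc |t| = |s - (s - t)| := by ring_nf
    _ ≤ |s| + |s - t| := abs_sub s (s - t)
  have h := nfun_core hc hcC hD hN hΔ hUC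
    (u := |s| + |t|) (v := |s| + |s - t|) (r := |s - t|)
    (by linarith) (by linarith) hr (by linarith) (by linarith)
  simpa [shiftDeriv] using h
end

section
/- Let φ be an N-function that is C² on (0,∞), satisfies the Δ₂-condition with constant D, and is uniformly convex with constants 0 < c ≤ C. Define ψ(t) = ∫₀ᵗ √(s φ'(s)) ds and V : ℝ → ℝ by V(s) = ψ'(|s|) s/|s| for s ≠ 0 and V(0) = 0. Then the pair (ψ, V) satisfies the orthotropic growth conditions with constants depending only on c, C, D; that is, for all s, t ∈ ℝ: (V(s) − V(t))(s − t) ≥ c' ψ''(|s| + |t|)|s − t|² and |V(s) − V(t)| ≤ C' ψ''(|s| + |t|)|s − t| (terms interpreted as 0 when s = t). -/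
/-!
Writing `g = ψ'`, the identity `g(t)² = t φ'(t)` turns `c ≤ t φ''/φ' ≤ C` into
`a ≤ t g'/g ≤ b` with `a = (1 + c)/2`, `b = (1 + C)/2`. Hence `g(t)/tᵃ` increases and
`g(t)/tᵇ` decreases on `(0, ∞)`. For `0 < t ≤ s` this pins `g t / g s` between `(t/s)ᵇ` and
`(t/s)ᵃ`, and Bernoulli's inequality turns that into `g s - g t ≃ (g s / s)(s - t)`; it also
gives `ψ''(u) ≃ g s / s` for `s ≤ u ≤ 2s`. When `t ≤ 0 < s` with `|t| ≤ s`, both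
`V s - V t` and `s - t` are comparable to `g s` and `s`. Since `V` is odd and the growth
conditions are symmetric, the case `|t| ≤ s` with `s > 0` is enough.
-/

open MeasureTheory

lemma min_mul_one_sub_le_one_sub_rpow {x γ : ℝ} (hx0 : 0 ≤ x) (hx1 : x ≤ 1) (hγ : 0 < γ) :
    min γ 1 * (1 - x) ≤ 1 - x ^ γ := by
  rcases le_or_gt γ 1 with h | h
  · have := rpow_one_add_le_one_add_mul_self (s := x - 1) (by linarith) hγ.le h
    rw [add_sub_cancel] at this
    rw [min_eq_left h]
    linarith
  · have := Real.rpow_le_rpow_of_exponent_ge' hx0 hx1 (by linarith) h.le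
    rw [Real.rpow_one] at this
    rw [min_eq_right h.le]
    linarith

lemma one_sub_rpow_le_max_mul_one_sub {x γ : ℝ} (hx0 : 0 ≤ x) (hx1 : x ≤ 1) (hγ : 0 < γ) :
    1 - x ^ γ ≤ max γ 1 * (1 - x) := by
  rcases le_or_gt 1 γ with h | h
  · have := one_add_mul_self_le_rpow_one_add (s := x - 1) (by linarith) h
    rw [add_sub_cancel] at this
    rw [max_eq_left h]
    linarith
  · have := Real.rpow_le_rpow_of_exponent_ge' hx0 hx1 hγ.le h.le
    rw [Real.rpow_one] at this
    rw [max_eq_right h.le]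
    linarith

section RpowComparison

variable {g g' : ℝ → ℝ}

lemma hasDerivAt_div_rpow {t : ℝ} (hg : HasDerivAt g (g' t) t) (ht : 0 < t) (γ : ℝ) :
    HasDerivAt (fun x => g x / x ^ γ) ((t * g' t - γ * g t) / t ^ (γ + 1)) t := by
  have hγ : t ^ γ ≠ 0 := (Real.rpow_pos_of_pos ht γ).ne'
  refine (hg.div (Real.hasDerivAt_rpow_const (Or.inl ht.ne')) hγ).congr_deriv ?_
  rw [Real.rpow_add_one ht.ne', Real.rpow_sub_one ht.ne']
  field_simp

lemma monotoneOn_div_rpow {γ : ℝ} (hg : ∀ t, 0 < t → HasDerivAt g (g' t) t)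
    (h : ∀ t, 0 < t → γ * g t ≤ t * g' t) :
    MonotoneOn (fun x => g x / x ^ γ) (Set.Ioi 0) := by
  have hd := fun t (ht : t ∈ Set.Ioi (0 : ℝ)) => hasDerivAt_div_rpow (hg t ht) ht γ
  refine monotoneOn_of_hasDerivWithinAt_nonneg (convex_Ioi 0)
    (f' := fun t => (t * g' t - γ * g t) / t ^ (γ + 1))
    (fun t ht => (hd t ht).continuousAt.continuousWithinAt) ?_ ?_ <;> rw [interior_Ioi]
  · exact fun t ht => (hd t ht).hasDerivWithinAt
  · exact fun t ht => div_nonneg (by linarith [h t ht]) (Real.rpow_pos_of_pos ht _).le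

lemma antitoneOn_div_rpow {γ : ℝ} (hg : ∀ t, 0 < t → HasDerivAt g (g' t) t)
    (h : ∀ t, 0 < t → t * g' t ≤ γ * g t) :
    AntitoneOn (fun x => g x / x ^ γ) (Set.Ioi 0) := by
  have hd := fun t (ht : t ∈ Set.Ioi (0 : ℝ)) => hasDerivAt_div_rpow (hg t ht) ht γ
  refine antitoneOn_of_hasDerivWithinAt_nonpos (convex_Ioi 0)
    (f' := fun t => (t * g' t - γ * g t) / t ^ (γ + 1))
    (fun t ht => (hd t ht).continuousAt.continuousWithinAt) ?_ ?_ <;> rw [interior_Ioi]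
  · exact fun t ht => (hd t ht).hasDerivWithinAt
  · exact fun t ht => div_nonpos_of_nonpos_of_nonneg (by linarith [h t ht])
      (Real.rpow_pos_of_pos ht _).le

end RpowComparison

namespace UniformlyConvex

variable {g g' V : ℝ → ℝ} {a b : ℝ}

lemma le_mul_rpow (hUC : UniformlyConvex g g' a b) (hg : ∀ t, 0 < t → HasDerivAt g (g' t) t)
    {x y : ℝ} (hx : 0 < x) (hxy : x ≤ y) : g x ≤ g y * (x / y) ^ a := by
  have hy : 0 < y := hx.trans_le hxy
  have h := monotoneOn_div_rpow hg (fun t ht => (hUC t ht).1) hx hy hxy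
  rw [div_le_iff₀ (Real.rpow_pos_of_pos hx a)] at h
  rwa [Real.div_rpow hx.le hy.le, ← mul_div_assoc, mul_div_right_comm]

lemma mul_rpow_le (hUC : UniformlyConvex g g' a b) (hg : ∀ t, 0 < t → HasDerivAt g (g' t) t)
    {x y : ℝ} (hx : 0 < x) (hxy : x ≤ y) : g y * (x / y) ^ b ≤ g x := by
  have hy : 0 < y := hx.trans_le hxy
  have h := antitoneOn_div_rpow hg (fun t ht => (hUC t ht).2) hx hy hxy
  rw [le_div_iff₀ (Real.rpow_pos_of_pos hx b)] at h
  rwa [Real.div_rpow hx.le hy.le, ← mul_div_assoc, mul_div_right_comm]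

lemma monotoneOn (hUC : UniformlyConvex g g' a b) (hg : ∀ t, 0 < t → HasDerivAt g (g' t) t)
    (ha : 0 ≤ a) (hg0 : ∀ t, 0 < t → 0 ≤ g t) : MonotoneOn g (Set.Ioi 0) := by
  intro x (hx : 0 < x) y (hy : 0 < y) hxy
  have hxy' : (x / y) ^ a ≤ 1 :=
    Real.rpow_le_one (by positivity) ((div_le_one hy).2 hxy) ha
  calc g x ≤ g y * (x / y) ^ a := hUC.le_mul_rpow hg hx hxy
    _ ≤ g y := mul_le_of_le_one_right (hg0 y hy) hxy'

lemma sub_bounds (hUC : UniformlyConvex g g' a b) (hg : ∀ t, 0 < t → HasDerivAt g (g' t) t)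
    (ha : 0 < a) (hb : 0 < b) {s t : ℝ} (ht : 0 < t) (hts : t ≤ s) (hgs : 0 ≤ g s) :
    min a 1 * (g s / s) * (s - t) ≤ g s - g t ∧
      g s - g t ≤ max b 1 * (g s / s) * (s - t) := by
  have hs : 0 < s := ht.trans_le hts
  have hx0 : 0 ≤ t / s := by positivity
  have hx1 : t / s ≤ 1 := (div_le_one hs).2 hts
  have hscale : (g s / s) * (s - t) = g s * (1 - t / s) := by field_simp
  constructor
  · calc min a 1 * (g s / s) * (s - t) = g s * (min a 1 * (1 - t / s)) := by
          rw [mul_assoc, hscale]; ring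
      _ ≤ g s * (1 - (t / s) ^ a) :=
          mul_le_mul_of_nonneg_left (min_mul_one_sub_le_one_sub_rpow hx0 hx1 ha) hgs
      _ ≤ g s - g t := by linarith [hUC.le_mul_rpow hg ht hts]
  · calc g s - g t ≤ g s * (1 - (t / s) ^ b) := by linarith [hUC.mul_rpow_le hg ht hts]
      _ ≤ g s * (max b 1 * (1 - t / s)) :=
          mul_le_mul_of_nonneg_left (one_sub_rpow_le_max_mul_one_sub hx0 hx1 hb) hgs
      _ = max b 1 * (g s / s) * (s - t) := by rw [mul_assoc, hscale]; ring

lemma deriv_bounds (hUC : UniformlyConvex g g' a b) (hg : ∀ t, 0 < t → HasDerivAt g (g' t) t)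
    (ha : 0 < a) (hb : 0 ≤ b) (hg0 : ∀ t, 0 < t → 0 ≤ g t) {s u : ℝ} (hs : 0 < s)
    (hsu : s ≤ u) (hus : u ≤ 2 * s) :
    a * (g s / s) / 2 ≤ g' u ∧ g' u ≤ b * 2 ^ b * (g s / s) := by
  have hu : 0 < u := hs.trans_le hsu
  have hgu := hg0 u hu
  obtain ⟨hlow, hup⟩ := hUC u hu
  constructor
  · have h : g s / (2 * s) ≤ g u / u :=
      div_le_div₀ hgu (hUC.monotoneOn hg ha.le hg0 hs hu hsu) hu hus
    calc a * (g s / s) / 2 = a * (g s / (2 * s)) := by ring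
      _ ≤ a * (g u / u) := mul_le_mul_of_nonneg_left h ha.le
      _ ≤ g' u := by rw [← mul_div_assoc, div_le_iff₀ hu]; linarith
  · have hhalf : (2⁻¹ : ℝ) ^ b ≤ (s / u) ^ b :=
      Real.rpow_le_rpow (by norm_num) (by rw [le_div_iff₀ hu]; linarith) hb
    have hdouble : g u ≤ 2 ^ b * g s := by
      have h := (mul_le_mul_of_nonneg_left hhalf hgu).trans (hUC.mul_rpow_le hg hs hsu)
      rwa [Real.inv_rpow zero_le_two, ← div_eq_mul_inv, div_le_iff₀ (by positivity),
        mul_comm] at h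
    calc g' u ≤ b * (g u / u) := by rw [← mul_div_assoc, le_div_iff₀ hu]; linarith
      _ ≤ b * (2 ^ b * g s / s) :=
          mul_le_mul_of_nonneg_left
            (div_le_div₀ (mul_nonneg (by positivity) (hg0 s hs)) hdouble hs hsu) hb
      _ = b * 2 ^ b * (g s / s) := by ring

lemma odd_sub_bounds (hUC : UniformlyConvex g g' a b)
    (hg : ∀ t, 0 < t → HasDerivAt g (g' t) t) (ha : 0 < a) (hb : 0 < b)
    (hg0 : ∀ t, 0 < t → 0 ≤ g t) (hVg : ∀ s, 0 < s → V s = g s)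
    (hVodd : ∀ s, V (-s) = -V s) {s t : ℝ} (hs : 0 < s) (hts : |t| ≤ s) :
    min a 2⁻¹ * (g s / s) * (s - t) ^ 2 ≤ (V s - V t) * (s - t) ∧
      |V s - V t| ≤ max b 2 * (g s / s) * |s - t| := by
  have hG : 0 ≤ g s / s := div_nonneg (hg0 s hs) hs.le
  rcases lt_or_ge 0 t with ht | ht
  · have hst : 0 ≤ s - t := by linarith [le_abs_self t]
    obtain ⟨hlow, hup⟩ := hUC.sub_bounds hg ha hb ht (by linarith) (hg0 s hs)
    rw [hVg s hs, hVg t ht]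
    constructor
    · calc min a 2⁻¹ * (g s / s) * (s - t) ^ 2
          ≤ min a 1 * (g s / s) * (s - t) * (s - t) := by rw [sq, ← mul_assoc]; gcongr; norm_num
        _ ≤ (g s - g t) * (s - t) := mul_le_mul_of_nonneg_right hlow hst
    · have hgst : 0 ≤ g s - g t := le_trans (by positivity) hlow
      rw [abs_of_nonneg hgst, abs_of_nonneg hst]
      exact hup.trans (by gcongr; norm_num)
  · -- here `V s - V t` lies in `[g s, 2 g s]` and `s - t` in `[s, 2 s]`
    have hVt : 0 ≤ -V t ∧ -V t ≤ g s := by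
      rcases ht.lt_or_eq with ht | rfl
      · have ht' : -t ≤ s := by rwa [abs_of_neg ht] at hts
        rw [← neg_neg t, hVodd, neg_neg, hVg (-t) (by linarith)]
        exact ⟨hg0 (-t) (by linarith), hUC.monotoneOn hg ha.le hg0 (neg_pos.2 ht) hs ht'⟩
      · have hV0 : V 0 = 0 := by have := hVodd 0; rw [neg_zero] at this; linarith
        exact ⟨by simp [hV0], by simpa [hV0] using hg0 s hs⟩
    have hgs : g s / s * s = g s := div_mul_cancel₀ _ hs.ne'
    have hst : s ≤ s - t := by linarith
    have hst2 : s - t ≤ 2 * s := by linarith [neg_abs_le t]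
    rw [hVg s hs]
    constructor
    · calc min a 2⁻¹ * (g s / s) * (s - t) ^ 2 ≤ 2⁻¹ * (g s / s) * (s - t) ^ 2 := by
            gcongr; exact min_le_right _ _
        _ ≤ g s / s * s * (s - t) := by
            nlinarith [mul_le_mul_of_nonneg_left hst2 (mul_nonneg hG (hs.le.trans hst))]
        _ ≤ (g s - V t) * (s - t) := by
            rw [hgs]; exact mul_le_mul_of_nonneg_right (by linarith [hVt.1]) (by linarith)
    · rw [abs_of_nonneg (by linarith), abs_of_nonneg (by linarith)]
      calc g s - V t ≤ 2 * (g s / s * s) := by linarith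
        _ ≤ max b 2 * (g s / s) * (s - t) := by
            rw [← mul_assoc]; gcongr; exact le_max_right _ _

end UniformlyConvex

lemma OrthotropicGrowth.of_pos {g' V : ℝ → ℝ} {c C : ℝ} (hVodd : ∀ s, V (-s) = -V s)
    (h : ∀ s t, 0 < s → |t| ≤ s →
      c * (g' (s + |t|) * |s - t| ^ 2) ≤ (V s - V t) * (s - t) ∧
        |V s - V t| ≤ C * (g' (s + |t|) * |s - t|)) :
    OrthotropicGrowth g' V c C := by
  intro ξ η
  wlog hle : |η| ≤ |ξ| generalizing ξ η
  · have := this η ξ (le_of_not_ge hle)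
    rwa [add_comm, abs_sub_comm η, abs_sub_comm (V η),
      show (V η - V ξ) * (η - ξ) = (V ξ - V η) * (ξ - η) by ring] at this
  rcases lt_trichotomy ξ 0 with hξ | rfl | hξ
  · have := h (-ξ) (-η) (by linarith) (by rwa [abs_neg, ← abs_of_neg hξ])
    have habs_neg_sub : ∀ x y : ℝ, |-x - -y| = |x - y| := fun x y => by
      rw [← abs_neg]; congr 1; ring
    rwa [hVodd, hVodd, abs_neg, habs_neg_sub, habs_neg_sub,
      show (-V ξ - -V η) * (-ξ - -η) = (V ξ - V η) * (ξ - η) by ring,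
      ← abs_of_neg hξ] at this
  · obtain rfl : η = 0 := abs_nonpos_iff.1 (by simpa using hle)
    simp
  · rw [abs_of_pos hξ] at hle ⊢
    exact h ξ η hξ hle

theorem UniformlyConvex.orthotropicGrowth {g g' V : ℝ → ℝ} {a b : ℝ}
    (hUC : UniformlyConvex g g' a b) (hg : ∀ t, 0 < t → HasDerivAt g (g' t) t)
    (ha : 0 < a) (hab : a ≤ b) (hg0 : ∀ t, 0 < t → 0 ≤ g t)
    (hVg : ∀ s, 0 < s → V s = g s) (hVodd : ∀ s, V (-s) = -V s) :
    OrthotropicGrowth g' V (min a 2⁻¹ / (b * 2 ^ b)) (2 * max b 2 / a) := by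
  have hb : 0 < b := ha.trans_le hab
  refine OrthotropicGrowth.of_pos hVodd fun s t hs hts => ?_
  obtain ⟨hlow, hup⟩ := hUC.odd_sub_bounds hg ha hb hg0 hVg hVodd hs hts
  obtain ⟨hd1, hd2⟩ := hUC.deriv_bounds hg ha hb.le hg0 hs
    (le_add_of_nonneg_right (abs_nonneg t)) (by linarith)
  constructor
  · calc min a 2⁻¹ / (b * 2 ^ b) * (g' (s + |t|) * |s - t| ^ 2)
        ≤ min a 2⁻¹ / (b * 2 ^ b) * (b * 2 ^ b * (g s / s) * |s - t| ^ 2) := by gcongr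
      _ = min a 2⁻¹ * (g s / s) * (s - t) ^ 2 := by rw [sq_abs]; field_simp
      _ ≤ (V s - V t) * (s - t) := hlow
  · calc |V s - V t| ≤ max b 2 * (g s / s) * |s - t| := hup
      _ ≤ max b 2 * (2 / a * g' (s + |t|)) * |s - t| := by
          gcongr; rw [div_mul_eq_mul_div, le_div_iff₀ ha]; linarith
      _ = 2 * max b 2 / a * (g' (s + |t|) * |s - t|) := by ring

lemma min_div_le_mul_max_div {a b : ℝ} (ha : 0 < a) (hab : a ≤ b) :
    min a 2⁻¹ / (b * 2 ^ b) ≤ 2 * max b 2 / a := by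
  have hb : 0 < b := ha.trans_le hab
  calc min a 2⁻¹ / (b * 2 ^ b) ≤ 1 := by
        refine div_le_one_of_le₀ ((min_le_left _ _).trans (hab.trans ?_)) (by positivity)
        exact le_mul_of_one_le_right hb.le (Real.one_le_rpow one_le_two hb.le)
    _ ≤ 2 * max b 2 / a := by
        rw [le_div_iff₀ ha]; linarith [le_max_left b 2]

noncomputable def psiSecondDeriv (φ' φ'' : ℝ → ℝ) (t : ℝ) : ℝ :=
  (φ' t + t * φ'' t) / (2 * psiDeriv φ' t)

lemma hasDerivAt_psiDeriv {φ' φ'' : ℝ → ℝ} {t : ℝ} (ht : 0 < t) (hpos : 0 < φ' t)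
    (hd : HasDerivAt φ' (φ'' t) t) : HasDerivAt (psiDeriv φ') (psiSecondDeriv φ' φ'' t) t := by
  have h := ((hasDerivAt_id t).mul hd).sqrt (mul_pos ht hpos).ne'
  unfold psiSecondDeriv psiDeriv
  simpa using h

lemma uniformlyConvex_psiDeriv {φ' φ'' : ℝ → ℝ} {c C : ℝ}
    (hUC : UniformlyConvex φ' φ'' c C) (hpos : ∀ t, 0 < t → 0 < φ' t) :
    UniformlyConvex (psiDeriv φ') (psiSecondDeriv φ' φ'') ((1 + c) / 2) ((1 + C) / 2) := by
  intro t ht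
  have hφ := hpos t ht
  have hg : 0 < psiDeriv φ' t := Real.sqrt_pos.2 (mul_pos ht hφ)
  have hsq : psiDeriv φ' t ^ 2 = t * φ' t := Real.sq_sqrt (mul_pos ht hφ).le
  have key : t * psiSecondDeriv φ' φ'' t =
      (φ' t + t * φ'' t) / (2 * φ' t) * psiDeriv φ' t := by
    unfold psiSecondDeriv
    field_simp
    linear_combination (-(φ' t + t * φ'' t)) * hsq
  obtain ⟨h1, h2⟩ := hUC t ht
  rw [key]
  constructor
  · exact mul_le_mul_of_nonneg_right (by rw [le_div_iff₀ (by positivity)]; linarith) hg.le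
  · exact mul_le_mul_of_nonneg_right (by rw [div_le_iff₀ (by positivity)]; linarith) hg.le

lemma Vof_of_pos {φ' : ℝ → ℝ} {s : ℝ} (hs : 0 < s) : Vof φ' s = psiDeriv φ' s := by
  rw [Vof, if_neg hs.ne', abs_of_pos hs, mul_div_cancel_right₀ _ hs.ne']

lemma Vof_neg (φ' : ℝ → ℝ) (s : ℝ) : Vof φ' (-s) = -Vof φ' s := by
  by_cases hs : s = 0
  · simp [Vof, hs]
  · simp only [Vof, neg_eq_zero, hs, if_false, abs_neg]
    ring

theorem statement6_general (c C D : ℝ) (hc : 0 < c) (hcC : c ≤ C) :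
    ∃ c' C' : ℝ, 0 < c' ∧ c' ≤ C' ∧
      ∀ (φ φ' φ'' : ℝ → ℝ),
        IsNFunction φ φ' →
        ContDiffOn ℝ 2 φ (Set.Ioi 0) →
        (∀ t : ℝ, 0 < t → HasDerivAt φ (φ' t) t) →
        (∀ t : ℝ, 0 < t → HasDerivAt φ' (φ'' t) t) →
        Delta2 φ D →
        UniformlyConvex φ' φ'' c C →
        ∃ ψ'' : ℝ → ℝ,
          (∀ t : ℝ, 0 < t → HasDerivAt (psiDeriv φ') (ψ'' t) t) ∧
          OrthotropicGrowth ψ'' (Vof φ') c' C' := by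
  have ha : 0 < (1 + c) / 2 := by linarith
  have hab : (1 + c) / 2 ≤ (1 + C) / 2 := by linarith
  refine ⟨_, _, div_pos (lt_min ha (by norm_num)) (mul_pos (ha.trans_le hab) (by positivity)),
    min_div_le_mul_max_div ha hab, ?_⟩
  intro φ φ' φ'' hN _ _ hφ'' _ hUC
  have hψ' : ∀ t, 0 < t → HasDerivAt (psiDeriv φ') (psiSecondDeriv φ' φ'' t) t :=
    fun t ht => hasDerivAt_psiDeriv ht (hN.deriv_pos t ht) (hφ'' t ht)
  exact ⟨psiSecondDeriv φ' φ'', hψ',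
    (uniformlyConvex_psiDeriv hUC hN.deriv_pos).orthotropicGrowth hψ' ha hab
      (fun t _ => Real.sqrt_nonneg _) (fun s hs => Vof_of_pos hs) (Vof_neg φ')⟩

/-- the pair `(ψ, V)`, with `ψ(t) = ∫₀ᵗ √(s φ'(s)) ds` and
`V(s) = ψ'(|s|) s/|s|`, satisfies the orthotropic growth conditions with constants
depending only on `c, C, D`. -/
theorem statement6 (c C D : ℝ) (hc : 0 < c) (hcC : c ≤ C) (hD : 0 < D) :
    ∃ c' C' : ℝ, 0 < c' ∧ c' ≤ C' ∧
      ∀ (φ φ' φ'' : ℝ → ℝ),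
        IsNFunction φ φ' →
        ContDiffOn ℝ 2 φ (Set.Ioi 0) →
        (∀ t : ℝ, 0 < t → HasDerivAt φ (φ' t) t) →
        (∀ t : ℝ, 0 < t → HasDerivAt φ' (φ'' t) t) →
        Delta2 φ D →
        UniformlyConvex φ' φ'' c C →
        ∃ ψ'' : ℝ → ℝ,
          (∀ t : ℝ, 0 < t → HasDerivAt (psiDeriv φ') (ψ'' t) t) ∧
          OrthotropicGrowth ψ'' (Vof φ') c' C' :=
  statement6_general c C D hc hcC
end
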